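/- arXiv:1010.1892 — 11 statements merged into one kernel-verified Lean document; each statement's English description precedes it below -/
import Mathlib

section
/- Let V be a finite-dimensional real vector space and let V1, V2 be subspaces of V with V1 ∩ V2 = {0}, dim V1 = n1, dim V2 = n2. Let 0 ≤ r1 ≤ n1 and 0 ≤ r2 ≤ n2 be integers. Then the map U ↦ (U ∩ V1, U ∩ V2) is a bijection from the set {U : U is a subspace of V, dim U = r1 + r2, dim(U ∩ V1) = r1, dim(U ∩ V2) = r2} onto the set {(W1, W2) : W1 is an r1-dimensional subspace of V1 and W2 is an r2-dimensional subspace of V2}, whose inverse is (W1, W2) ↦ W1 + W2. -/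
open Module

private lemma sup_inf_eq_left {V : Type*} [AddCommGroup V] [Module ℝ V]
    {V1 V2 W1 W2 : Submodule ℝ V} (h12 : V1 ⊓ V2 = ⊥)
    (hW1 : W1 ≤ V1) (hW2 : W2 ≤ V2) : (W1 ⊔ W2) ⊓ V1 = W1 := by
  apply le_antisymm
  · rintro x ⟨hx, hxV1⟩
    obtain ⟨a, ha, b, hb, rfl⟩ := Submodule.mem_sup.mp hx
    have hbV1 : b ∈ V1 := by
      have : b = (a + b) - a := by abel
      rw [this]; exact V1.sub_mem hxV1 (hW1 ha)
    have : b ∈ V1 ⊓ V2 := ⟨hbV1, hW2 hb⟩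
    rw [h12, Submodule.mem_bot] at this
    simpa [this] using ha
  · exact le_inf le_sup_left hW1

/-- Proposition 3.4 (the underlying bijection): if `V1 ∩ V2 = {0}`, `dim V1 = n1`,
`dim V2 = n2`, `r1 ≤ n1` and `r2 ≤ n2`, then `U ↦ (U ∩ V1, U ∩ V2)` is a bijection from the
set of `(r1+r2)`-dimensional subspaces `U` with `dim (U ∩ V1) = r1`, `dim (U ∩ V2) = r2` onto
the set of pairs `(W1, W2)` of an `r1`-dimensional subspace of `V1` and an `r2`-dimensional
subspace of `V2`; its inverse is `(W1, W2) ↦ W1 + W2`. -/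
theorem stmt_1 {V : Type*} [AddCommGroup V] [Module ℝ V] [FiniteDimensional ℝ V]
    (V1 V2 : Submodule ℝ V) (n1 n2 r1 r2 : ℕ)
    (h12 : V1 ⊓ V2 = ⊥)
    (hn1 : finrank ℝ V1 = n1) (hn2 : finrank ℝ V2 = n2)
    (hr1 : r1 ≤ n1) (hr2 : r2 ≤ n2) :
    Set.BijOn (fun U : Submodule ℝ V => (U ⊓ V1, U ⊓ V2))
      {U : Submodule ℝ V | finrank ℝ U = r1 + r2 ∧
        finrank ℝ ↥(U ⊓ V1) = r1 ∧ finrank ℝ ↥(U ⊓ V2) = r2}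
      {W : Submodule ℝ V × Submodule ℝ V |
        W.1 ≤ V1 ∧ finrank ℝ W.1 = r1 ∧ W.2 ≤ V2 ∧ finrank ℝ W.2 = r2} ∧
    Set.InvOn (fun W : Submodule ℝ V × Submodule ℝ V => W.1 ⊔ W.2)
      (fun U : Submodule ℝ V => (U ⊓ V1, U ⊓ V2))
      {U : Submodule ℝ V | finrank ℝ U = r1 + r2 ∧
        finrank ℝ ↥(U ⊓ V1) = r1 ∧ finrank ℝ ↥(U ⊓ V2) = r2}
      {W : Submodule ℝ V × Submodule ℝ V |
        W.1 ≤ V1 ∧ finrank ℝ W.1 = r1 ∧ W.2 ≤ V2 ∧ finrank ℝ W.2 = r2} := by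
  have h21 : V2 ⊓ V1 = ⊥ := by rw [inf_comm]; exact h12
  -- key: finrank of sup of disjoint pieces
  have hsup : ∀ W1 W2 : Submodule ℝ V, W1 ≤ V1 → W2 ≤ V2 →
      finrank ℝ ↥(W1 ⊔ W2) = finrank ℝ W1 + finrank ℝ W2 := by
    intro W1 W2 hW1 hW2
    have hdisj : W1 ⊓ W2 = ⊥ := by
      rw [eq_bot_iff, ← h12]; exact inf_le_inf hW1 hW2
    have := Submodule.finrank_sup_add_finrank_inf_eq W1 W2
    rw [hdisj] at this
    simpa using this
  -- U = (U ⊓ V1) ⊔ (U ⊓ V2) on the left set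
  have hleft : ∀ U : Submodule ℝ V, finrank ℝ U = r1 + r2 →
      finrank ℝ ↥(U ⊓ V1) = r1 → finrank ℝ ↥(U ⊓ V2) = r2 →
      (U ⊓ V1) ⊔ (U ⊓ V2) = U := by
    intro U hU h1 h2
    have hle : (U ⊓ V1) ⊔ (U ⊓ V2) ≤ U := sup_le inf_le_left inf_le_left
    have hfr : finrank ℝ ↥((U ⊓ V1) ⊔ (U ⊓ V2)) = r1 + r2 := by
      rw [hsup _ _ inf_le_right inf_le_right, h1, h2]
    exact Submodule.eq_of_le_of_finrank_eq hle (by rw [hfr, hU])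
  have hinv1 : Set.LeftInvOn (fun W : Submodule ℝ V × Submodule ℝ V => W.1 ⊔ W.2)
      (fun U : Submodule ℝ V => (U ⊓ V1, U ⊓ V2))
      {U : Submodule ℝ V | finrank ℝ U = r1 + r2 ∧
        finrank ℝ ↥(U ⊓ V1) = r1 ∧ finrank ℝ ↥(U ⊓ V2) = r2} := by
    rintro U ⟨hU, h1, h2⟩
    exact hleft U hU h1 h2
  have hinv2 : Set.RightInvOn (fun W : Submodule ℝ V × Submodule ℝ V => W.1 ⊔ W.2)
      (fun U : Submodule ℝ V => (U ⊓ V1, U ⊓ V2))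
      {W : Submodule ℝ V × Submodule ℝ V |
        W.1 ≤ V1 ∧ finrank ℝ W.1 = r1 ∧ W.2 ≤ V2 ∧ finrank ℝ W.2 = r2} := by
    rintro ⟨W1, W2⟩ ⟨hW1, h1, hW2, h2⟩
    simp only [Prod.mk.injEq]
    constructor
    · exact sup_inf_eq_left h12 hW1 hW2
    · rw [sup_comm]; exact sup_inf_eq_left h21 hW2 hW1
  have hmt1 : Set.MapsTo (fun U : Submodule ℝ V => (U ⊓ V1, U ⊓ V2))
      {U : Submodule ℝ V | finrank ℝ U = r1 + r2 ∧
        finrank ℝ ↥(U ⊓ V1) = r1 ∧ finrank ℝ ↥(U ⊓ V2) = r2}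
      {W : Submodule ℝ V × Submodule ℝ V |
        W.1 ≤ V1 ∧ finrank ℝ W.1 = r1 ∧ W.2 ≤ V2 ∧ finrank ℝ W.2 = r2} := by
    rintro U ⟨hU, h1, h2⟩
    exact ⟨inf_le_right, h1, inf_le_right, h2⟩
  have hmt2 : Set.MapsTo (fun W : Submodule ℝ V × Submodule ℝ V => W.1 ⊔ W.2)
      {W : Submodule ℝ V × Submodule ℝ V |
        W.1 ≤ V1 ∧ finrank ℝ W.1 = r1 ∧ W.2 ≤ V2 ∧ finrank ℝ W.2 = r2}
      {U : Submodule ℝ V | finrank ℝ U = r1 + r2 ∧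
        finrank ℝ ↥(U ⊓ V1) = r1 ∧ finrank ℝ ↥(U ⊓ V2) = r2} := by
    rintro ⟨W1, W2⟩ ⟨hW1, h1, hW2, h2⟩
    dsimp only
    refine ⟨by rw [hsup _ _ hW1 hW2, h1, h2], ?_, ?_⟩
    · rw [sup_inf_eq_left h12 hW1 hW2]; exact h1
    · rw [sup_comm, sup_inf_eq_left h21 hW2 hW1]; exact h2
  exact ⟨Set.InvOn.bijOn ⟨hinv1, hinv2⟩ hmt1 hmt2, hinv1, hinv2⟩
end

section
/- Let V be a finite-dimensional real vector space and let V1, V2, U be subspaces of V such that any two of V1, V2, U intersect only in {0}. Suppose dim U = r and there is a subspace W of V with dim W = 2r, U ⊆ W, dim(W ∩ V1) = r and dim(W ∩ V2) = r. Then U ⊆ V1 + V2. -/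
open Module

/-- Proposition 3.7, first assertion: if any two of `V1`, `V2`, `U` intersect trivially,
`dim U = r`, and `U` is contained in a `2r`-dimensional subspace `W` with
`dim (W ∩ V1) = dim (W ∩ V2) = r`, then `U ⊆ V1 + V2`. -/
theorem stmt_2 {V : Type*} [AddCommGroup V] [Module ℝ V] [FiniteDimensional ℝ V]
    (V1 V2 U : Submodule ℝ V) (r : ℕ)
    (h12 : V1 ⊓ V2 = ⊥) (h1U : V1 ⊓ U = ⊥) (h2U : V2 ⊓ U = ⊥)
    (hU : finrank ℝ U = r)
    (W : Submodule ℝ V) (hW : finrank ℝ W = 2 * r) (hUW : U ≤ W)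
    (hW1 : finrank ℝ ↥(W ⊓ V1) = r) (hW2 : finrank ℝ ↥(W ⊓ V2) = r) :
    U ≤ V1 ⊔ V2 := by
  set A := W ⊓ V1 with hA
  set B := W ⊓ V2 with hB
  have hAB : A ⊓ B = ⊥ := by
    rw [eq_bot_iff]
    intro x hx
    have : x ∈ V1 ⊓ V2 := ⟨hx.1.2, hx.2.2⟩
    rwa [h12] at this
  have hsum : finrank ℝ ↥(A ⊔ B) = 2 * r := by
    have := Submodule.finrank_sup_add_finrank_inf_eq A B
    rw [hAB, hW1, hW2] at this
    simp only [finrank_bot, add_zero] at this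
    omega
  have hle : A ⊔ B ≤ W := sup_le inf_le_left inf_le_left
  have heq : A ⊔ B = W := Submodule.eq_of_le_of_finrank_le hle (by rw [hsum, hW])
  calc U ≤ W := hUW
    _ = A ⊔ B := heq.symm
    _ ≤ V1 ⊔ V2 := sup_le_sup inf_le_right inf_le_right
end

section
/- Let V be a finite-dimensional real vector space and let V1, V2, U be subspaces of V such that any two of V1, V2, U intersect only in {0}, and dim U = r. If W and W' are subspaces of V with dim W = dim W' = 2r, U ⊆ W, U ⊆ W', dim(W ∩ V1) = dim(W ∩ V2) = r and dim(W' ∩ V1) = dim(W' ∩ V2) = r, then W = W'. -/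
set_option maxHeartbeats 1000000


open Module

/-- Proposition 3.7, uniqueness assertion: with `V1`, `V2`, `U` pairwise intersecting
trivially and `dim U = r`, a `2r`-dimensional subspace containing `U` and meeting each of
`V1`, `V2` in dimension `r` is unique. -/
theorem stmt_3 {V : Type*} [AddCommGroup V] [Module ℝ V] [FiniteDimensional ℝ V]
    (V1 V2 U : Submodule ℝ V) (r : ℕ)
    (h12 : V1 ⊓ V2 = ⊥) (h1U : V1 ⊓ U = ⊥) (h2U : V2 ⊓ U = ⊥)
    (hU : finrank ℝ U = r)
    (W W' : Submodule ℝ V)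
    (hW : finrank ℝ W = 2 * r) (hW' : finrank ℝ W' = 2 * r)
    (hUW : U ≤ W) (hUW' : U ≤ W')
    (hW1 : finrank ℝ ↥(W ⊓ V1) = r) (hW2 : finrank ℝ ↥(W ⊓ V2) = r)
    (hW'1 : finrank ℝ ↥(W' ⊓ V1) = r) (hW'2 : finrank ℝ ↥(W' ⊓ V2) = r) :
    W = W' := by
  -- dim of T := (U ⊔ V2) ⊓ V1 is at most r
  have hUV2 : finrank ℝ ↥(U ⊔ V2) = r + finrank ℝ V2 := by
    have := Submodule.finrank_sup_add_finrank_inf_eq U V2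
    rw [inf_comm, h2U, finrank_bot, hU] at this
    omega
  have hV12 : finrank ℝ ↥(V1 ⊔ V2) = finrank ℝ V1 + finrank ℝ V2 := by
    have := Submodule.finrank_sup_add_finrank_inf_eq V1 V2
    rw [h12, finrank_bot] at this
    omega
  have hbig : finrank ℝ V1 + finrank ℝ V2 ≤ finrank ℝ ↥((U ⊔ V2) ⊔ V1) := by
    rw [← hV12]
    apply Submodule.finrank_mono
    rw [sup_assoc, sup_comm V2 V1]
    exact le_sup_right
  have hT : finrank ℝ ↥((U ⊔ V2) ⊓ V1) ≤ r := by
    have := Submodule.finrank_sup_add_finrank_inf_eq (U ⊔ V2) V1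
    omega
  have key : ∀ X : Submodule ℝ V, finrank ℝ X = 2 * r → U ≤ X →
      finrank ℝ ↥(X ⊓ V1) = r → finrank ℝ ↥(X ⊓ V2) = r →
      X = U ⊔ ((U ⊔ V2) ⊓ V1) := by
    intro X hX hUX hX1 hX2
    have inf1 : U ⊓ (X ⊓ V1) = ⊥ := by
      rw [← le_bot_iff, ← h1U]
      exact le_inf (inf_le_right.trans inf_le_right) inf_le_left
    have inf2 : U ⊓ (X ⊓ V2) = ⊥ := by
      rw [← le_bot_iff, ← h2U]
      exact le_inf (inf_le_right.trans inf_le_right) inf_le_left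
    have e1 : X = U ⊔ (X ⊓ V1) := by
      have hd := Submodule.finrank_sup_add_finrank_inf_eq U (X ⊓ V1)
      rw [inf1, finrank_bot, hU, hX1] at hd
      exact (Submodule.eq_of_le_of_finrank_le (sup_le hUX inf_le_left) (by omega)).symm
    have e2 : X = U ⊔ (X ⊓ V2) := by
      have hd := Submodule.finrank_sup_add_finrank_inf_eq U (X ⊓ V2)
      rw [inf2, finrank_bot, hU, hX2] at hd
      exact (Submodule.eq_of_le_of_finrank_le (sup_le hUX inf_le_left) (by omega)).symm
    have hXle : X ≤ U ⊔ V2 := by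
      rw [e2]
      exact sup_le le_sup_left (le_sup_of_le_right inf_le_right)
    have eT : X ⊓ V1 = (U ⊔ V2) ⊓ V1 :=
      Submodule.eq_of_le_of_finrank_le (inf_le_inf_right V1 hXle) (by omega)
    rw [e1, eT]
  rw [key W hW hUW hW1 hW2, key W' hW' hUW' hW'1 hW'2]
end

section
/- Let V be a finite-dimensional real vector space and let V1, V2, U be subspaces of V such that any two of V1, V2, U intersect only in {0}, dim U = r, and U ⊆ V1 + V2. Then the subspace W = (U + V1) ∩ (U + V2) satisfies: dim W = 2r, U ⊆ W, dim(W ∩ V1) = r and dim(W ∩ V2) = r. -/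
open Module

/-- Proposition 3.7, existence construction: if `V1`, `V2`, `U` pairwise intersect
trivially, `dim U = r` and `U ⊆ V1 + V2`, then `W = (U + V1) ∩ (U + V2)` is a
`2r`-dimensional subspace containing `U` that meets each of `V1`, `V2` in dimension `r`. -/
theorem stmt_4 {V : Type*} [AddCommGroup V] [Module ℝ V] [FiniteDimensional ℝ V]
    (V1 V2 U : Submodule ℝ V) (r : ℕ)
    (h12 : V1 ⊓ V2 = ⊥) (h1U : V1 ⊓ U = ⊥) (h2U : V2 ⊓ U = ⊥)
    (hU : finrank ℝ U = r) (hUsub : U ≤ V1 ⊔ V2) :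
    finrank ℝ ↥((U ⊔ V1) ⊓ (U ⊔ V2)) = 2 * r ∧
    U ≤ (U ⊔ V1) ⊓ (U ⊔ V2) ∧
    finrank ℝ ↥(((U ⊔ V1) ⊓ (U ⊔ V2)) ⊓ V1) = r ∧
    finrank ℝ ↥(((U ⊔ V1) ⊓ (U ⊔ V2)) ⊓ V2) = r := by
  have hUV : U ⊔ (V1 ⊔ V2) = V1 ⊔ V2 := sup_eq_right.mpr hUsub
  have h1 : finrank ℝ ↥(U ⊔ V1) = r + finrank ℝ V1 := by
    have h := Submodule.finrank_sup_add_finrank_inf_eq U V1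
    rw [inf_comm, h1U, hU] at h
    simpa using h
  have h2 : finrank ℝ ↥(U ⊔ V2) = r + finrank ℝ V2 := by
    have h := Submodule.finrank_sup_add_finrank_inf_eq U V2
    rw [inf_comm, h2U, hU] at h
    simpa using h
  have hsup12 : finrank ℝ ↥(V1 ⊔ V2) = finrank ℝ V1 + finrank ℝ V2 := by
    have h := Submodule.finrank_sup_add_finrank_inf_eq V1 V2
    rw [h12] at h
    simpa using h
  have hWsup : (U ⊔ V1) ⊔ (U ⊔ V2) = V1 ⊔ V2 := by
    rw [sup_sup_sup_comm, sup_idem, hUV]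
  refine ⟨?_, le_inf le_sup_left le_sup_left, ?_, ?_⟩
  · have h := Submodule.finrank_sup_add_finrank_inf_eq (U ⊔ V1) (U ⊔ V2)
    rw [hWsup, hsup12, h1, h2] at h
    omega
  · have e1 : ((U ⊔ V1) ⊓ (U ⊔ V2)) ⊓ V1 = (U ⊔ V2) ⊓ V1 := by
      rw [inf_assoc, inf_eq_right.mpr (le_trans inf_le_right le_sup_right)]
    rw [e1]
    have h := Submodule.finrank_sup_add_finrank_inf_eq (U ⊔ V2) V1
    have hs : (U ⊔ V2) ⊔ V1 = V1 ⊔ V2 := by rw [sup_assoc, sup_comm V2 V1, hUV]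
    rw [hs, hsup12, h2] at h
    omega
  · have e2 : ((U ⊔ V1) ⊓ (U ⊔ V2)) ⊓ V2 = (U ⊔ V1) ⊓ V2 := by
      rw [inf_right_comm, inf_eq_left.mpr (le_trans inf_le_right le_sup_right)]
    rw [e2]
    have h := Submodule.finrank_sup_add_finrank_inf_eq (U ⊔ V1) V2
    have hs : (U ⊔ V1) ⊔ V2 = V1 ⊔ V2 := by rw [sup_assoc, hUV]
    rw [hs, hsup12, h1] at h
    omega
end

section
/- Let V be a real vector space with dim V = m and let V1, V2, V3 be subspaces of dimensions n1, n2, n3 respectively, such that any two of them intersect only in {0} and V1 + V2 + V3 = V. Let r ≥ 0 be an integer and set W = (V1 + V2) ∩ V3. Then the map U ↦ U ∩ V3 is a bijection from the set {U : U is a subspace of V, dim U = 2r, dim(U ∩ Vi) ≥ r for i = 1, 2, 3} onto the set of r-dimensional subspaces of W. -/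
open Module

section Aux

variable {V : Type*} [AddCommGroup V] [Module ℝ V] [FiniteDimensional ℝ V]

private lemma aux_dim (A B W' : Submodule ℝ V) (hW : W' ≤ A ⊔ B) (h1 : W' ⊓ B = ⊥)
    (h2 : A ⊓ B = ⊥) : finrank ℝ ↥((W' ⊔ B) ⊓ A) = finrank ℝ ↥W' := by
  have e1 := Submodule.finrank_sup_add_finrank_inf_eq W' B
  have e2 := Submodule.finrank_sup_add_finrank_inf_eq (W' ⊔ B) A
  have e3 := Submodule.finrank_sup_add_finrank_inf_eq A B
  have hs : (W' ⊔ B) ⊔ A = A ⊔ B :=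
    le_antisymm (sup_le (sup_le hW le_sup_right) le_sup_left)
      (sup_le le_sup_right ((le_sup_right : B ≤ W' ⊔ B).trans le_sup_left))
  rw [h1, finrank_bot] at e1
  rw [hs] at e2
  rw [h2, finrank_bot] at e3
  omega

private lemma aux_facts (V1 V2 V3 : Submodule ℝ V) (r : ℕ)
    (h12 : V1 ⊓ V2 = ⊥) (h13 : V1 ⊓ V3 = ⊥) (h23 : V2 ⊓ V3 = ⊥)
    (U : Submodule ℝ V) (hU : finrank ℝ ↥U = 2 * r)
    (hU1 : r ≤ finrank ℝ ↥(U ⊓ V1)) (hU2 : r ≤ finrank ℝ ↥(U ⊓ V2))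
    (hU3 : r ≤ finrank ℝ ↥(U ⊓ V3)) :
    finrank ℝ ↥(U ⊓ V1) = r ∧ finrank ℝ ↥(U ⊓ V2) = r ∧ finrank ℝ ↥(U ⊓ V3) = r ∧
      (U ⊓ V1) ⊔ (U ⊓ V2) = U := by
  have key : ∀ A B : Submodule ℝ V, A ⊓ B = ⊥ →
      finrank ℝ ↥((U ⊓ A) ⊔ (U ⊓ B)) = finrank ℝ ↥(U ⊓ A) + finrank ℝ ↥(U ⊓ B) := by
    intro A B hAB
    have e := Submodule.finrank_sup_add_finrank_inf_eq (U ⊓ A) (U ⊓ B)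
    have hb : (U ⊓ A) ⊓ (U ⊓ B) = ⊥ :=
      le_bot_iff.mp (hAB ▸ inf_le_inf inf_le_right inf_le_right)
    rw [hb, finrank_bot] at e
    omega
  have hle : ∀ A B : Submodule ℝ V, finrank ℝ ↥((U ⊓ A) ⊔ (U ⊓ B)) ≤ 2 * r := by
    intro A B
    rw [← hU]
    exact Submodule.finrank_mono (sup_le inf_le_left inf_le_left)
  have k12 := key V1 V2 h12
  have k13 := key V1 V3 h13
  have k23 := key V2 V3 h23
  have l12 := hle V1 V2
  have l13 := hle V1 V3
  have l23 := hle V2 V3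
  have hd1 : finrank ℝ ↥(U ⊓ V1) = r := by omega
  have hd2 : finrank ℝ ↥(U ⊓ V2) = r := by omega
  have hd3 : finrank ℝ ↥(U ⊓ V3) = r := by omega
  refine ⟨hd1, hd2, hd3, ?_⟩
  apply Submodule.eq_of_le_of_finrank_le (sup_le inf_le_left inf_le_left)
  omega

end Aux

/-- Proposition 3.9 (underlying bijection): with `dim V = m`, subspaces `V1`, `V2`, `V3` of
dimensions `n1`, `n2`, `n3` pairwise intersecting trivially and `V1 + V2 + V3 = V`, and
`W = (V1 + V2) ∩ V3`, the map `U ↦ U ∩ V3` is a bijection from the set of `2r`-dimensional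
subspaces `U` with `dim (U ∩ Vi) ≥ r` for `i = 1, 2, 3`, onto the set of `r`-dimensional
subspaces of `W`. -/
theorem stmt_6 {V : Type*} [AddCommGroup V] [Module ℝ V] [FiniteDimensional ℝ V]
    (V1 V2 V3 : Submodule ℝ V) (m n1 n2 n3 r : ℕ)
    (hm : finrank ℝ V = m)
    (hn1 : finrank ℝ V1 = n1) (hn2 : finrank ℝ V2 = n2) (hn3 : finrank ℝ V3 = n3)
    (h12 : V1 ⊓ V2 = ⊥) (h13 : V1 ⊓ V3 = ⊥) (h23 : V2 ⊓ V3 = ⊥)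
    (hsum : V1 ⊔ V2 ⊔ V3 = ⊤) :
    Set.BijOn (fun U : Submodule ℝ V => U ⊓ V3)
      {U : Submodule ℝ V | finrank ℝ U = 2 * r ∧
        r ≤ finrank ℝ ↥(U ⊓ V1) ∧ r ≤ finrank ℝ ↥(U ⊓ V2) ∧ r ≤ finrank ℝ ↥(U ⊓ V3)}
      {W' : Submodule ℝ V | W' ≤ (V1 ⊔ V2) ⊓ V3 ∧ finrank ℝ W' = r} := by
  have h21 : V2 ⊓ V1 = ⊥ := by rwa [inf_comm]
  have h31 : V3 ⊓ V1 = ⊥ := by rwa [inf_comm]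
  have h32 : V3 ⊓ V2 = ⊥ := by rwa [inf_comm]
  -- canonical form of U in terms of W' = U ⊓ V3
  have canon : ∀ U ∈ {U : Submodule ℝ V | finrank ℝ U = 2 * r ∧
        r ≤ finrank ℝ ↥(U ⊓ V1) ∧ r ≤ finrank ℝ ↥(U ⊓ V2) ∧ r ≤ finrank ℝ ↥(U ⊓ V3)},
      U = (((U ⊓ V3) ⊔ V2) ⊓ V1) ⊔ (((U ⊓ V3) ⊔ V1) ⊓ V2) := by
    intro U hU
    obtain ⟨hU0, hU1, hU2, hU3⟩ := hU
    obtain ⟨hd1, hd2, hd3, hsupU⟩ :=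
      aux_facts V1 V2 V3 r h12 h13 h23 U hU0 hU1 hU2 hU3
    have hle12 : U ⊓ V3 ≤ V1 ⊔ V2 := by
      refine inf_le_left.trans ?_
      rw [← hsupU]
      exact sup_le (inf_le_right.trans le_sup_left) (inf_le_right.trans le_sup_right)
    have hWb2 : (U ⊓ V3) ⊓ V2 = ⊥ :=
      le_bot_iff.mp (h32 ▸ inf_le_inf inf_le_right le_rfl)
    have hWb1 : (U ⊓ V3) ⊓ V1 = ⊥ :=
      le_bot_iff.mp (h31 ▸ inf_le_inf inf_le_right le_rfl)
    -- G1 ≤ U ⊓ V1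
    have hG1le : ((U ⊓ V3) ⊔ V2) ⊓ V1 ≤ U ⊓ V1 := by
      rintro x ⟨hx2, hx1⟩
      obtain ⟨w, hw, v, hv, rfl⟩ := Submodule.mem_sup.mp hx2
      have hwU : w ∈ (U ⊓ V1) ⊔ (U ⊓ V2) := hsupU.symm ▸ hw.1
      obtain ⟨a, ha, b, hb, hab⟩ := Submodule.mem_sup.mp hwU
      have hbv : b + v ∈ V1 ⊓ V2 := by
        constructor
        · have : b + v = (w + v) - a := by rw [← hab]; abel
          rw [this]
          exact sub_mem hx1 ha.2
        · exact add_mem hb.2 hv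
      rw [h12, Submodule.mem_bot] at hbv
      have : w + v = a := by
        have : w = a + b := hab.symm
        rw [this]
        have hb0 : b + v = 0 := hbv
        have : a + b + v = a + (b + v) := by abel
        rw [this, hb0, add_zero]
      rw [this]
      exact ⟨ha.1, ha.2⟩
    have hG2le : ((U ⊓ V3) ⊔ V1) ⊓ V2 ≤ U ⊓ V2 := by
      rintro x ⟨hx2, hx1⟩
      obtain ⟨w, hw, v, hv, rfl⟩ := Submodule.mem_sup.mp hx2
      have hwU : w ∈ (U ⊓ V1) ⊔ (U ⊓ V2) := hsupU.symm ▸ hw.1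
      obtain ⟨a, ha, b, hb, hab⟩ := Submodule.mem_sup.mp hwU
      have hav : a + v ∈ V1 ⊓ V2 := by
        constructor
        · exact add_mem ha.2 hv
        · have : a + v = (w + v) - b := by rw [← hab]; abel
          rw [this]
          exact sub_mem hx1 hb.2
      rw [h12, Submodule.mem_bot] at hav
      have : w + v = b := by
        have hw' : w = a + b := hab.symm
        rw [hw']
        have : a + b + v = b + (a + v) := by abel
        rw [this, hav, add_zero]
      rw [this]
      exact ⟨hb.1, hb.2⟩
    -- dimensions of G1, G2
    have hdG1 : finrank ℝ ↥(((U ⊓ V3) ⊔ V2) ⊓ V1) = finrank ℝ ↥(U ⊓ V3) :=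
      aux_dim V1 V2 (U ⊓ V3) hle12 hWb2 h12
    have hdG2 : finrank ℝ ↥(((U ⊓ V3) ⊔ V1) ⊓ V2) = finrank ℝ ↥(U ⊓ V3) := by
      refine aux_dim V2 V1 (U ⊓ V3) ?_ hWb1 h21
      rwa [sup_comm]
    -- equalities
    have hG1 : ((U ⊓ V3) ⊔ V2) ⊓ V1 = U ⊓ V1 :=
      Submodule.eq_of_le_of_finrank_le hG1le (by omega)
    have hG2 : ((U ⊓ V3) ⊔ V1) ⊓ V2 = U ⊓ V2 :=
      Submodule.eq_of_le_of_finrank_le hG2le (by omega)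
    rw [hG1, hG2, hsupU]
  constructor
  · -- MapsTo
    intro U hU
    obtain ⟨hU0, hU1, hU2, hU3⟩ := hU
    obtain ⟨hd1, hd2, hd3, hsupU⟩ :=
      aux_facts V1 V2 V3 r h12 h13 h23 U hU0 hU1 hU2 hU3
    refine ⟨le_inf ?_ inf_le_right, hd3⟩
    refine inf_le_left.trans ?_
    rw [← hsupU]
    exact sup_le (inf_le_right.trans le_sup_left) (inf_le_right.trans le_sup_right)
  constructor
  · -- InjOn
    intro U hU U' hU' h
    have e1 := canon U hU
    have e2 := canon U' hU'
    simp only at h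
    rw [e1, e2, h]
  · -- SurjOn
    rintro W' ⟨hWle, hWr⟩
    have hW3 : W' ≤ V3 := hWle.trans inf_le_right
    have hW12 : W' ≤ V1 ⊔ V2 := hWle.trans inf_le_left
    have hWb2 : W' ⊓ V2 = ⊥ := le_bot_iff.mp (h32 ▸ inf_le_inf hW3 le_rfl)
    have hWb1 : W' ⊓ V1 = ⊥ := le_bot_iff.mp (h31 ▸ inf_le_inf hW3 le_rfl)
    set G1 : Submodule ℝ V := (W' ⊔ V2) ⊓ V1 with hG1def
    set G2 : Submodule ℝ V := (W' ⊔ V1) ⊓ V2 with hG2def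
    have hdG1 : finrank ℝ ↥G1 = r := by
      rw [hG1def, aux_dim V1 V2 W' hW12 hWb2 h12, hWr]
    have hdG2 : finrank ℝ ↥G2 = r := by
      rw [hG2def]
      rw [aux_dim V2 V1 W' (by rwa [sup_comm]) hWb1 h21, hWr]
    set U : Submodule ℝ V := G1 ⊔ W' with hUdef
    -- G2 ≤ U
    have hG2U : G2 ≤ U := by
      rintro x ⟨hx1, hx2⟩
      obtain ⟨w, hw, a, ha, rfl⟩ := Submodule.mem_sup.mp hx1
      have haG1 : a ∈ G1 := by
        refine ⟨?_, ha⟩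
        apply Submodule.mem_sup.mpr
        refine ⟨-w, neg_mem hw, w + a, hx2, by abel⟩
      exact add_mem (Submodule.mem_sup_right hw) (Submodule.mem_sup_left haG1)
    -- dim U = 2r
    have hbU : G1 ⊓ W' = ⊥ :=
      le_bot_iff.mp (h13 ▸ inf_le_inf inf_le_right hW3)
    have hdU : finrank ℝ ↥U = 2 * r := by
      have e := Submodule.finrank_sup_add_finrank_inf_eq G1 W'
      rw [hbU, finrank_bot] at e
      rw [hUdef]
      omega
    have hUmem : finrank ℝ ↥U = 2 * r ∧ r ≤ finrank ℝ ↥(U ⊓ V1) ∧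
        r ≤ finrank ℝ ↥(U ⊓ V2) ∧ r ≤ finrank ℝ ↥(U ⊓ V3) := by
      refine ⟨hdU, ?_, ?_, ?_⟩
      · rw [← hdG1]
        exact Submodule.finrank_mono (le_inf le_sup_left inf_le_right)
      · rw [← hdG2]
        exact Submodule.finrank_mono (le_inf hG2U inf_le_right)
      · rw [← hWr]
        exact Submodule.finrank_mono (le_inf le_sup_right hW3)
    refine ⟨U, hUmem, ?_⟩
    obtain ⟨hd1, hd2, hd3, hsupU⟩ := aux_facts V1 V2 V3 r h12 h13 h23 U hUmem.1
      hUmem.2.1 hUmem.2.2.1 hUmem.2.2.2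
    have hd3' : finrank ℝ ↥((G1 ⊔ W') ⊓ V3) = r := hd3
    show U ⊓ V3 = W'
    exact (Submodule.eq_of_le_of_finrank_le (le_inf le_sup_right hW3) (by omega)).symm
end

section
/- Let V be a real vector space with dim V = m and let V1, V2, V3 be subspaces of dimensions n1, n2, n3 respectively, such that any two of them intersect only in {0} and V1 + V2 + V3 = V. If an integer r satisfies r > n1 + n2 + n3 − m, then there is no subspace U of V with dim U = 2r and dim(U ∩ Vi) ≥ r for each i = 1, 2, 3. -/
open Module

/-- Remark 3.10: with `dim V = m`, subspaces `V1`, `V2`, `V3` of dimensions `n1`, `n2`, `n3`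
pairwise intersecting trivially and `V1 + V2 + V3 = V`, if `r > n1 + n2 + n3 - m`, then
there is no `2r`-dimensional subspace `U` with `dim (U ∩ Vi) ≥ r` for each `i = 1, 2, 3`. -/
theorem stmt_7 {V : Type*} [AddCommGroup V] [Module ℝ V] [FiniteDimensional ℝ V]
    (V1 V2 V3 : Submodule ℝ V) (m n1 n2 n3 r : ℕ)
    (hm : finrank ℝ V = m)
    (hn1 : finrank ℝ V1 = n1) (hn2 : finrank ℝ V2 = n2) (hn3 : finrank ℝ V3 = n3)
    (h12 : V1 ⊓ V2 = ⊥) (h13 : V1 ⊓ V3 = ⊥) (h23 : V2 ⊓ V3 = ⊥)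
    (hsum : V1 ⊔ V2 ⊔ V3 = ⊤)
    (hr : (n1 : ℤ) + n2 + n3 - m < r) :
    ¬ ∃ U : Submodule ℝ V, finrank ℝ U = 2 * r ∧
        r ≤ finrank ℝ ↥(U ⊓ V1) ∧ r ≤ finrank ℝ ↥(U ⊓ V2) ∧ r ≤ finrank ℝ ↥(U ⊓ V3) := by
  rintro ⟨U, hU, h1, h2, h3⟩
  -- (U ⊓ V1) ⊓ (U ⊓ V2) = ⊥
  have hinf12 : (U ⊓ V1) ⊓ (U ⊓ V2) = ⊥ := by
    rw [← le_bot_iff, ← h12]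
    exact le_inf (inf_le_right.trans' inf_le_left) (inf_le_right.trans' inf_le_right)
  have hdimsup : finrank ℝ ↥((U ⊓ V1) ⊔ (U ⊓ V2)) =
      finrank ℝ ↥(U ⊓ V1) + finrank ℝ ↥(U ⊓ V2) := by
    have := Submodule.finrank_sup_add_finrank_inf_eq (U ⊓ V1) (U ⊓ V2)
    rw [hinf12, finrank_bot] at this
    omega
  have hsupleU : (U ⊓ V1) ⊔ (U ⊓ V2) ≤ U := sup_le inf_le_left inf_le_left
  have hle : finrank ℝ ↥((U ⊓ V1) ⊔ (U ⊓ V2)) ≤ finrank ℝ ↥U :=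
    Submodule.finrank_mono hsupleU
  have hUeq : (U ⊓ V1) ⊔ (U ⊓ V2) = U := by
    apply Submodule.eq_of_le_of_finrank_le hsupleU
    omega
  have hUle : U ≤ V1 ⊔ V2 := by
    rw [← hUeq]
    exact sup_le (inf_le_right.trans le_sup_left) (inf_le_right.trans le_sup_right)
  have hdim12 : finrank ℝ ↥(V1 ⊔ V2) = n1 + n2 := by
    have := Submodule.finrank_sup_add_finrank_inf_eq V1 V2
    rw [h12, finrank_bot, hn1, hn2] at this
    omega
  have hdim123 : finrank ℝ ↥((V1 ⊔ V2) ⊔ V3) = m := by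
    rw [hsum, finrank_top, hm]
  have hkey := Submodule.finrank_sup_add_finrank_inf_eq (V1 ⊔ V2) V3
  rw [hdim123, hdim12, hn3] at hkey
  have hUV3 : finrank ℝ ↥(U ⊓ V3) ≤ finrank ℝ ↥((V1 ⊔ V2) ⊓ V3) :=
    Submodule.finrank_mono (inf_le_inf_right V3 hUle)
  omega
end

section
/- Let Π1, Π2, Π be nonempty affine subspaces of ℝ^m of dimensions n1, n2, r respectively, such that any two of them are skew, i.e., for any two of them, the affine span of their union has dimension equal to the sum of their dimensions plus 1. Suppose W and W' are nonempty affine subspaces of ℝ^m, each of dimension 2r + 1, each containing Π, and such that for i = 1, 2 the intersections W ∩ Πi and W' ∩ Πi are nonempty affine subspaces of dimension ≥ r. Then W = W'. -/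
open Module

private theorem key1 {V : Type*} [AddCommGroup V] [Module ℝ V] [FiniteDimensional ℝ V]
    {D E F : Submodule ℝ V} {v : V} {r n : ℕ}
    (hD : finrank ℝ D = r) (hE : finrank ℝ E = n)
    (hskew : finrank ℝ ↥(E ⊔ D ⊔ (Submodule.span ℝ {v})) = n + r + 1)
    (hFE : F ≤ E) (hF : r ≤ finrank ℝ F) :
    2 * r + 1 ≤ finrank ℝ ↥(D ⊔ F ⊔ (Submodule.span ℝ {v})) := by
  set L := Submodule.span ℝ {v} with hL
  have hLle : finrank ℝ L ≤ 1 := by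
    rcases eq_or_ne v 0 with h | h
    · rw [hL, h, Submodule.span_zero_singleton]; simp
    · rw [hL, finrank_span_singleton h]
  have hskew' : finrank ℝ ↥(D ⊔ (E ⊔ L)) = n + r + 1 := by
    rw [show D ⊔ (E ⊔ L) = E ⊔ D ⊔ L by ac_rfl]; exact hskew
  have h1 := Submodule.finrank_sup_add_finrank_inf_eq D (E ⊔ L)
  have h2 := Submodule.finrank_sup_add_finrank_inf_eq E L
  have h3 := Submodule.finrank_sup_add_finrank_inf_eq F L
  have h4 := Submodule.finrank_sup_add_finrank_inf_eq D (F ⊔ L)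
  have hFL : finrank ℝ ↥(F ⊓ L) ≤ finrank ℝ ↥(E ⊓ L) :=
    Submodule.finrank_mono (inf_le_inf_right L hFE)
  have hDFL : finrank ℝ ↥(D ⊓ (F ⊔ L)) ≤ finrank ℝ ↥(D ⊓ (E ⊔ L)) :=
    Submodule.finrank_mono (inf_le_inf_left D (sup_le_sup_right hFE L))
  have hFLE : finrank ℝ ↥(F ⊔ L) ≤ finrank ℝ ↥(E ⊔ L) :=
    Submodule.finrank_mono (sup_le_sup_right hFE L)
  rw [sup_assoc]; omega

/-- If `W` has dimension `2r+1`, contains `P` (dimension `r`), `P` is skew to `Pi`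
(dimension `n`), and `W ⊓ Pi` is nonempty of dimension `≥ r`, then `W ≤ Pi ⊔ P`. -/
private theorem step {m r n : ℕ} {P Pi W : AffineSubspace ℝ (Fin m → ℝ)}
    (hPne : (P : Set (Fin m → ℝ)).Nonempty)
    (hr : finrank ℝ P.direction = r) (hn : finrank ℝ Pi.direction = n)
    (hskew : finrank ℝ (affineSpan ℝ ((Pi : Set (Fin m → ℝ)) ∪ P)).direction = n + r + 1)
    (hPW : P ≤ W)
    (hQne : ((W ⊓ Pi : AffineSubspace ℝ (Fin m → ℝ)) : Set (Fin m → ℝ)).Nonempty)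
    (hQ : r ≤ finrank ℝ (W ⊓ Pi).direction)
    (hWdim : finrank ℝ W.direction = 2 * r + 1) :
    W ≤ Pi ⊔ P := by
  obtain ⟨p, hp⟩ := hPne
  obtain ⟨q, hq⟩ := hQne
  have hqW : q ∈ W := (inf_le_left : W ⊓ Pi ≤ W) hq
  have hqPi : q ∈ Pi := (inf_le_right : W ⊓ Pi ≤ Pi) hq
  set Q := W ⊓ Pi with hQdef
  -- skew hypothesis in sup form
  have hskew' : finrank ℝ
      ↥(Pi.direction ⊔ P.direction ⊔ Submodule.span ℝ {p -ᵥ q}) = n + r + 1 := by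
    rw [← AffineSubspace.direction_sup hqPi hp]
    rw [AffineSubspace.span_union, AffineSubspace.affineSpan_coe,
      AffineSubspace.affineSpan_coe] at hskew
    exact hskew
  have hspan : Submodule.span ℝ ({q -ᵥ p} : Set (Fin m → ℝ))
      = Submodule.span ℝ {p -ᵥ q} := by
    rw [← neg_vsub_eq_vsub_rev q p, ← Set.neg_singleton, Submodule.span_neg]
  have hdirsup : (P ⊔ Q).direction
      = P.direction ⊔ Q.direction ⊔ Submodule.span ℝ {p -ᵥ q} := by
    rw [AffineSubspace.direction_sup hp hq, hspan]
  have hbig : 2 * r + 1 ≤ finrank ℝ (P ⊔ Q).direction := by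
    rw [hdirsup]
    exact key1 hr hn hskew' (AffineSubspace.direction_le (inf_le_right : Q ≤ Pi)) hQ
  have hle : P ⊔ Q ≤ W := sup_le hPW inf_le_left
  have hdirle : (P ⊔ Q).direction ≤ W.direction := AffineSubspace.direction_le hle
  have hdireq : (P ⊔ Q).direction = W.direction := by
    apply Submodule.eq_of_le_of_finrank_le hdirle
    omega
  have hWeq : P ⊔ Q = W :=
    AffineSubspace.ext_of_direction_eq hdireq
      ⟨p, (le_sup_left : P ≤ P ⊔ Q) hp, hPW hp⟩
  rw [← hWeq]
  exact sup_le le_sup_right (le_trans inf_le_right le_sup_left)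

/-- Corollary 3.8: let `Π1`, `Π2`, `Π` be nonempty affine subspaces of `ℝ^m` of dimensions
`n1`, `n2`, `r`, any two of which are jointly skew (the affine span of the union of any two
of them has dimension equal to the sum of their dimensions plus one). Then there is at most
one `(2r+1)`-dimensional affine subspace containing `Π` and meeting each `Πi` in a nonempty
affine subspace of dimension `≥ r`. -/
theorem stmt_8 (m n1 n2 r : ℕ)
    (P1 P2 P : AffineSubspace ℝ (Fin m → ℝ))
    (hP1ne : (P1 : Set (Fin m → ℝ)).Nonempty)
    (hP2ne : (P2 : Set (Fin m → ℝ)).Nonempty)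
    (hPne : (P : Set (Fin m → ℝ)).Nonempty)
    (hn1 : finrank ℝ P1.direction = n1)
    (hn2 : finrank ℝ P2.direction = n2)
    (hr : finrank ℝ P.direction = r)
    (hskew12 : finrank ℝ (affineSpan ℝ ((P1 : Set (Fin m → ℝ)) ∪ P2)).direction = n1 + n2 + 1)
    (hskew1 : finrank ℝ (affineSpan ℝ ((P1 : Set (Fin m → ℝ)) ∪ P)).direction = n1 + r + 1)
    (hskew2 : finrank ℝ (affineSpan ℝ ((P2 : Set (Fin m → ℝ)) ∪ P)).direction = n2 + r + 1)
    (W W' : AffineSubspace ℝ (Fin m → ℝ))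
    (hWne : (W : Set (Fin m → ℝ)).Nonempty)
    (hW'ne : (W' : Set (Fin m → ℝ)).Nonempty)
    (hWdim : finrank ℝ W.direction = 2 * r + 1)
    (hW'dim : finrank ℝ W'.direction = 2 * r + 1)
    (hPW : P ≤ W) (hPW' : P ≤ W')
    (hW1ne : ((W ⊓ P1 : AffineSubspace ℝ (Fin m → ℝ)) : Set (Fin m → ℝ)).Nonempty)
    (hW2ne : ((W ⊓ P2 : AffineSubspace ℝ (Fin m → ℝ)) : Set (Fin m → ℝ)).Nonempty)
    (hW'1ne : ((W' ⊓ P1 : AffineSubspace ℝ (Fin m → ℝ)) : Set (Fin m → ℝ)).Nonempty)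
    (hW'2ne : ((W' ⊓ P2 : AffineSubspace ℝ (Fin m → ℝ)) : Set (Fin m → ℝ)).Nonempty)
    (hW1 : r ≤ finrank ℝ (W ⊓ P1).direction)
    (hW2 : r ≤ finrank ℝ (W ⊓ P2).direction)
    (hW'1 : r ≤ finrank ℝ (W' ⊓ P1).direction)
    (hW'2 : r ≤ finrank ℝ (W' ⊓ P2).direction) :
    W = W' := by
  obtain ⟨p, hp⟩ := hPne
  set S1 := P1 ⊔ P with hS1
  set S2 := P2 ⊔ P with hS2
  -- dimensions of S1, S2
  have hS1dim : finrank ℝ S1.direction = n1 + r + 1 := by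
    rw [AffineSubspace.span_union, AffineSubspace.affineSpan_coe,
      AffineSubspace.affineSpan_coe] at hskew1
    exact hskew1
  have hS2dim : finrank ℝ S2.direction = n2 + r + 1 := by
    rw [AffineSubspace.span_union, AffineSubspace.affineSpan_coe,
      AffineSubspace.affineSpan_coe] at hskew2
    exact hskew2
  have hpS1 : p ∈ S1 := (le_sup_right : P ≤ S1) hp
  have hpS2 : p ∈ S2 := (le_sup_right : P ≤ S2) hp
  -- direction of S1 ⊔ S2
  have hds : (S1 ⊔ S2).direction = S1.direction ⊔ S2.direction := by
    rw [AffineSubspace.direction_sup hpS1 hpS2, vsub_self,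
      Submodule.span_zero_singleton, sup_bot_eq]
  have hP12 : P1 ⊔ P2 ≤ S1 ⊔ S2 :=
    sup_le_sup (le_sup_left : P1 ≤ S1) (le_sup_left : P2 ≤ S2)
  have hlow : n1 + n2 + 1 ≤ finrank ℝ ↥(S1.direction ⊔ S2.direction) := by
    rw [← hds]
    rw [AffineSubspace.span_union, AffineSubspace.affineSpan_coe,
      AffineSubspace.affineSpan_coe] at hskew12
    calc n1 + n2 + 1 = finrank ℝ (P1 ⊔ P2).direction := hskew12.symm
      _ ≤ finrank ℝ (S1 ⊔ S2).direction :=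
        Submodule.finrank_mono (AffineSubspace.direction_le hP12)
  have h5 := Submodule.finrank_sup_add_finrank_inf_eq S1.direction S2.direction
  have hinfdim : finrank ℝ (S1 ⊓ S2).direction ≤ 2 * r + 1 := by
    have h6 : finrank ℝ (S1 ⊓ S2).direction ≤ finrank ℝ ↥(S1.direction ⊓ S2.direction) :=
      Submodule.finrank_mono (AffineSubspace.direction_inf S1 S2)
    omega
  -- W and W' are both S1 ⊓ S2
  have key : ∀ (X : AffineSubspace ℝ (Fin m → ℝ)),
      (X : Set (Fin m → ℝ)).Nonempty → finrank ℝ X.direction = 2 * r + 1 → P ≤ X →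
      ((X ⊓ P1 : AffineSubspace ℝ (Fin m → ℝ)) : Set (Fin m → ℝ)).Nonempty →
      ((X ⊓ P2 : AffineSubspace ℝ (Fin m → ℝ)) : Set (Fin m → ℝ)).Nonempty →
      r ≤ finrank ℝ (X ⊓ P1).direction → r ≤ finrank ℝ (X ⊓ P2).direction →
      X = S1 ⊓ S2 := by
    intro X hXne hXdim hPX hX1ne hX2ne hX1 hX2
    have h1 : X ≤ S1 := step ⟨p, hp⟩ hr hn1 hskew1 hPX hX1ne hX1 hXdim
    have h2 : X ≤ S2 := step ⟨p, hp⟩ hr hn2 hskew2 hPX hX2ne hX2 hXdim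
    have hle : X ≤ S1 ⊓ S2 := le_inf h1 h2
    have hdirle : X.direction ≤ (S1 ⊓ S2).direction := AffineSubspace.direction_le hle
    have hdireq : X.direction = (S1 ⊓ S2).direction := by
      apply Submodule.eq_of_le_of_finrank_le hdirle
      omega
    obtain ⟨x, hx⟩ := hXne
    exact AffineSubspace.ext_of_direction_eq hdireq ⟨x, hx, hle hx⟩
  rw [key W hWne hWdim hPW hW1ne hW2ne hW1 hW2,
    key W' hW'ne hW'dim hPW' hW'1ne hW'2ne hW'1 hW'2]
end

section
/- Let A1, …, A8 be eight points of ℝ³ such that the family of their 24 coordinates is algebraically independent over ℚ. Then the set of affine lines in ℝ³ (1-dimensional affine subspaces) that meet all four closed segments [A1, A2], [A3, A4], [A5, A6], [A7, A8] has at most two elements. -/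
open Module

section Det

variable {R : Type*} [CommRing R]

/-- Explicit 3×3 determinant of three column vectors. -/
def det3 (a b c : Fin 3 → R) : R :=
  a 0 * (b 1 * c 2 - b 2 * c 1) - a 1 * (b 0 * c 2 - b 2 * c 0)
    + a 2 * (b 0 * c 1 - b 1 * c 0)

/-- Constant coefficient of the bilinear incidence form. -/
def cAl (AA : Fin 8 → Fin 3 → R) (k k' : Fin 8) : R :=
  det3 (fun i => AA 2 i - AA 0 i) (fun i => AA k i - AA 0 i) (fun i => AA k' i - AA 0 i)

/-- Coefficient of `s`. -/
def cBe (AA : Fin 8 → Fin 3 → R) (k k' : Fin 8) : R :=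
  -det3 (fun i => AA 1 i - AA 0 i) (fun i => AA k i - AA 0 i) (fun i => AA k' i - AA 0 i)
  - det3 (fun i => AA 2 i - AA 0 i) (fun i => AA 1 i - AA 0 i) (fun i => AA k' i - AA 0 i)
  - det3 (fun i => AA 2 i - AA 0 i) (fun i => AA k i - AA 0 i) (fun i => AA 1 i - AA 0 i)

/-- Coefficient of `t`. -/
def cGa (AA : Fin 8 → Fin 3 → R) (k k' : Fin 8) : R :=
  det3 (fun i => AA 3 i - AA 2 i) (fun i => AA k i - AA 0 i) (fun i => AA k' i - AA 0 i)

/-- Coefficient of `s*t`. -/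
def cDe (AA : Fin 8 → Fin 3 → R) (k k' : Fin 8) : R :=
  -det3 (fun i => AA 3 i - AA 2 i) (fun i => AA 1 i - AA 0 i) (fun i => AA k' i - AA 0 i)
  - det3 (fun i => AA 3 i - AA 2 i) (fun i => AA k i - AA 0 i) (fun i => AA 1 i - AA 0 i)

/-- Skewness polynomial for the two first lines. -/
def pSkew (AA : Fin 8 → Fin 3 → R) : R :=
  det3 (fun i => AA 2 i - AA 0 i) (fun i => AA 1 i - AA 0 i) (fun i => AA 3 i - AA 2 i)

def pC2 (AA : Fin 8 → Fin 3 → R) : R :=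
  cBe AA 4 5 * cDe AA 6 7 - cBe AA 6 7 * cDe AA 4 5

def pC3 (AA : Fin 8 → Fin 3 → R) : R :=
  cGa AA 4 5 * cDe AA 6 7 - cGa AA 6 7 * cDe AA 4 5

end Det

section MapLemmas

variable {R S : Type*} [CommRing R] [CommRing S] (φ : R →+* S)

lemma det3_map (a b c : Fin 3 → R) :
    φ (det3 a b c) = det3 (fun i => φ (a i)) (fun i => φ (b i)) (fun i => φ (c i)) := by
  simp [det3]

lemma pSkew_map (AA : Fin 8 → Fin 3 → R) :
    φ (pSkew AA) = pSkew (fun i j => φ (AA i j)) := by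
  simp [pSkew, det3]

lemma pC2_map (AA : Fin 8 → Fin 3 → R) :
    φ (pC2 AA) = pC2 (fun i j => φ (AA i j)) := by
  simp [pC2, cBe, cDe, det3]


lemma pC3_map (AA : Fin 8 → Fin 3 → R) :
    φ (pC3 AA) = pC3 (fun i j => φ (AA i j)) := by
  simp [pC3, cGa, cDe, det3]


end MapLemmas

/-- determinant vanishes when first column is a combination of the others -/
lemma det3_comb1 (a b c : Fin 3 → ℝ) (s t : ℝ) (h : ∀ i, a i = s * b i + t * c i) :
    det3 a b c = 0 := by
  unfold det3
  linear_combination (b 1 * c 2 - b 2 * c 1) * h 0 - (b 0 * c 2 - b 2 * c 0) * h 1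
    + (b 0 * c 1 - b 1 * c 0) * h 2

/-- determinant vanishes when an affine combination of the last two columns is a multiple
of the first -/
lemma det3_comb23 (a b c : Fin 3 → ℝ) (lam mu : ℝ)
    (h : ∀ i, (1 - mu) * b i + mu * c i = lam * a i) : det3 a b c = 0 := by
  have h1 : (1 - mu) * det3 a b c = 0 := by
    unfold det3
    linear_combination (a 2 * c 1 - a 1 * c 2) * h 0 + (a 0 * c 2 - a 2 * c 0) * h 1
      + (a 1 * c 0 - a 0 * c 1) * h 2
  have h2 : mu * det3 a b c = 0 := by
    unfold det3
    linear_combination (a 1 * b 2 - a 2 * b 1) * h 0 + (a 2 * b 0 - a 0 * b 2) * h 1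
      + (a 0 * b 1 - a 1 * b 0) * h 2
  linear_combination h1 + h2

/-- a quadratic with nonzero leading coefficient has at most two roots -/
lemma quad_roots {c0 c1 c2 s1 s2 s3 : ℝ} (h2 : c2 ≠ 0)
    (e1 : c0 + c1 * s1 + c2 * s1 ^ 2 = 0) (e2 : c0 + c1 * s2 + c2 * s2 ^ 2 = 0)
    (e3 : c0 + c1 * s3 + c2 * s3 ^ 2 = 0) (d12 : s1 ≠ s2) (d13 : s1 ≠ s3) : s2 = s3 := by
  have k12 : c1 + c2 * (s1 + s2) = 0 := by
    have h := sub_ne_zero.2 d12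
    have : (s1 - s2) * (c1 + c2 * (s1 + s2)) = 0 := by linear_combination e1 - e2
    exact (mul_eq_zero.1 this).resolve_left h
  have k13 : c1 + c2 * (s1 + s3) = 0 := by
    have h := sub_ne_zero.2 d13
    have : (s1 - s3) * (c1 + c2 * (s1 + s3)) = 0 := by linear_combination e1 - e3
    exact (mul_eq_zero.1 this).resolve_left h
  have : c2 * (s2 - s3) = 0 := by linear_combination k12 - k13
  have := (mul_eq_zero.1 this).resolve_left h2
  linarith

lemma seg_param {a b y : Fin 3 → ℝ} (h : y ∈ segment ℝ a b) :
    ∃ s : ℝ, ∀ i, y i = a i + s * (b i - a i) := by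
  rw [segment_eq_image'] at h
  obtain ⟨s, -, rfl⟩ := h
  exact ⟨s, fun i => by simp [Pi.smul_apply, smul_eq_mul]⟩

lemma line_eq {L : AffineSubspace ℝ (Fin 3 → ℝ)} (hr : finrank ℝ L.direction = 1)
    {p q : Fin 3 → ℝ} (hp : p ∈ L) (hq : q ∈ L) (hpq : p ≠ q) :
    L = affineSpan ℝ {p, q} := by
  have hle : affineSpan ℝ ({p, q} : Set (Fin 3 → ℝ)) ≤ L := by
    rw [affineSpan_le]
    rintro x (rfl | rfl) <;> assumption
  have hd : (affineSpan ℝ ({p, q} : Set (Fin 3 → ℝ))).direction = L.direction := by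
    apply Submodule.eq_of_le_of_finrank_eq (AffineSubspace.direction_le hle)
    rw [direction_affineSpan, vectorSpan_pair, hr, finrank_span_singleton]
    intro h
    exact hpq (by rwa [vsub_eq_sub, sub_eq_zero] at h)
  exact (AffineSubspace.ext_of_direction_eq hd
    ⟨p, left_mem_affineSpan_pair ℝ p q, hp⟩).symm

lemma mem_line_param {p q r : Fin 3 → ℝ} (h : r ∈ affineSpan ℝ ({p, q} : Set (Fin 3 → ℝ))) :
    ∃ lam : ℝ, ∀ i, r i = p i + lam * (q i - p i) := by
  have h' : (r - p) +ᵥ p ∈ affineSpan ℝ ({p, q} : Set (Fin 3 → ℝ)) := by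
    simpa [vadd_eq_add, sub_add_cancel] using h
  obtain ⟨lam, hlam⟩ := vadd_left_mem_affineSpan_pair.1 h'
  refine ⟨lam, fun i => ?_⟩
  have := congrFun hlam i
  simp only [Pi.smul_apply, vsub_eq_sub, Pi.sub_apply, smul_eq_mul] at this
  linarith
lemma Fbil (A : Fin 8 → Fin 3 → ℝ) (k k' : Fin 8) (s t : ℝ) (p q : Fin 3 → ℝ)
    (hp : ∀ i, p i = A 0 i + s * (A 1 i - A 0 i))
    (hq : ∀ i, q i = A 2 i + t * (A 3 i - A 2 i)) :
    det3 (fun i => q i - p i) (fun i => A k i - p i) (fun i => A k' i - p i)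
      = cAl A k k' + cBe A k k' * s + cGa A k k' * t + cDe A k k' * s * t := by
  simp only [det3, cAl, cBe, cGa, cDe, hp, hq]
  ring

/-- sample rational point -/
def q0 : Fin 8 → Fin 3 → ℚ := fun i j => ((3 * (i : ℕ) + (j : ℕ) : ℕ) : ℚ) ^ 3

lemma q0_skew : pSkew q0 ≠ 0 := by
  norm_num [pSkew, det3, q0, show ((0:Fin 8):ℕ) = 0 from rfl, show ((1:Fin 8):ℕ) = 1 from rfl, show ((2:Fin 8):ℕ) = 2 from rfl, show ((3:Fin 8):ℕ) = 3 from rfl, show ((4:Fin 8):ℕ) = 4 from rfl, show ((5:Fin 8):ℕ) = 5 from rfl, show ((6:Fin 8):ℕ) = 6 from rfl, show ((7:Fin 8):ℕ) = 7 from rfl, show ((0:Fin 3):ℕ) = 0 from rfl, show ((1:Fin 3):ℕ) = 1 from rfl, show ((2:Fin 3):ℕ) = 2 from rfl]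

lemma q0_c2 : pC2 q0 ≠ 0 := by
  norm_num [pC2, cBe, cDe, det3, q0, show ((0:Fin 8):ℕ) = 0 from rfl, show ((1:Fin 8):ℕ) = 1 from rfl, show ((2:Fin 8):ℕ) = 2 from rfl, show ((3:Fin 8):ℕ) = 3 from rfl, show ((4:Fin 8):ℕ) = 4 from rfl, show ((5:Fin 8):ℕ) = 5 from rfl, show ((6:Fin 8):ℕ) = 6 from rfl, show ((7:Fin 8):ℕ) = 7 from rfl, show ((0:Fin 3):ℕ) = 0 from rfl, show ((1:Fin 3):ℕ) = 1 from rfl, show ((2:Fin 3):ℕ) = 2 from rfl]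

lemma q0_c3 : pC3 q0 ≠ 0 := by
  norm_num [pC3, cGa, cDe, det3, q0, show ((0:Fin 8):ℕ) = 0 from rfl, show ((1:Fin 8):ℕ) = 1 from rfl, show ((2:Fin 8):ℕ) = 2 from rfl, show ((3:Fin 8):ℕ) = 3 from rfl, show ((4:Fin 8):ℕ) = 4 from rfl, show ((5:Fin 8):ℕ) = 5 from rfl, show ((6:Fin 8):ℕ) = 6 from rfl, show ((7:Fin 8):ℕ) = 7 from rfl, show ((0:Fin 3):ℕ) = 0 from rfl, show ((1:Fin 3):ℕ) = 1 from rfl, show ((2:Fin 3):ℕ) = 2 from rfl]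
noncomputable def XX : Fin 8 → Fin 3 → MvPolynomial (Fin 8 × Fin 3) ℚ :=
  fun i j => MvPolynomial.X (i, j)

section Transfer

variable {A : Fin 8 → Fin 3 → ℝ}
  (hA : AlgebraicIndependent ℚ (fun p : Fin 8 × Fin 3 => A p.1 p.2))

lemma XX_ne_skew : pSkew XX ≠ 0 := by
  intro h0
  have h1 := congrArg (MvPolynomial.eval fun p : Fin 8 × Fin 3 => q0 p.1 p.2) h0
  rw [map_zero, pSkew_map] at h1
  simp only [XX, MvPolynomial.eval_X] at h1
  exact q0_skew h1

lemma XX_ne_c2 : pC2 XX ≠ 0 := by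
  intro h0
  have h1 := congrArg (MvPolynomial.eval fun p : Fin 8 × Fin 3 => q0 p.1 p.2) h0
  rw [map_zero, pC2_map] at h1
  simp only [XX, MvPolynomial.eval_X] at h1
  exact q0_c2 h1

lemma XX_ne_c3 : pC3 XX ≠ 0 := by
  intro h0
  have h1 := congrArg (MvPolynomial.eval fun p : Fin 8 × Fin 3 => q0 p.1 p.2) h0
  rw [map_zero, pC3_map] at h1
  simp only [XX, MvPolynomial.eval_X] at h1
  exact q0_c3 h1

include hA

lemma A_ne_skew : pSkew A ≠ 0 := by
  intro h
  have hinj : Function.Injective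
      (MvPolynomial.aeval (fun p : Fin 8 × Fin 3 => A p.1 p.2) :
        MvPolynomial (Fin 8 × Fin 3) ℚ →ₐ[ℚ] ℝ) := hA
  apply XX_ne_skew
  apply hinj
  rw [map_zero]
  simp only [pSkew, det3] at h
  simp only [XX, pSkew, det3, map_sub, map_add, map_mul, map_neg, MvPolynomial.aeval_X]
  linear_combination h

lemma A_ne_c2 : pC2 A ≠ 0 := by
  intro h
  have hinj : Function.Injective
      (MvPolynomial.aeval (fun p : Fin 8 × Fin 3 => A p.1 p.2) :
        MvPolynomial (Fin 8 × Fin 3) ℚ →ₐ[ℚ] ℝ) := hA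
  apply XX_ne_c2
  apply hinj
  rw [map_zero]
  simp only [pC2, cBe, cDe, det3] at h
  simp only [XX, pC2, cBe, cDe, det3, map_sub, map_add, map_mul, map_neg, MvPolynomial.aeval_X]
  linear_combination h

lemma A_ne_c3 : pC3 A ≠ 0 := by
  intro h
  have hinj : Function.Injective
      (MvPolynomial.aeval (fun p : Fin 8 × Fin 3 => A p.1 p.2) :
        MvPolynomial (Fin 8 × Fin 3) ℚ →ₐ[ℚ] ℝ) := hA
  apply XX_ne_c3
  apply hinj
  rw [map_zero]
  simp only [pC3, cGa, cDe, det3] at h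
  simp only [XX, pC3, cGa, cDe, det3, map_sub, map_add, map_mul, map_neg, MvPolynomial.aeval_X]
  linear_combination h

end Transfer
lemma key (A : Fin 8 → Fin 3 → ℝ) (hskew : pSkew A ≠ 0)
    (L : AffineSubspace ℝ (Fin 3 → ℝ))
    (hrk : finrank ℝ L.direction = 1)
    (h2 : ((L : Set (Fin 3 → ℝ)) ∩ segment ℝ (A 0) (A 1)).Nonempty)
    (h3 : ((L : Set (Fin 3 → ℝ)) ∩ segment ℝ (A 2) (A 3)).Nonempty)
    (h4 : ((L : Set (Fin 3 → ℝ)) ∩ segment ℝ (A 4) (A 5)).Nonempty)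
    (h5 : ((L : Set (Fin 3 → ℝ)) ∩ segment ℝ (A 6) (A 7)).Nonempty) :
    ∃ s t : ℝ,
      cAl A 4 5 + cBe A 4 5 * s + cGa A 4 5 * t + cDe A 4 5 * s * t = 0 ∧
      cAl A 6 7 + cBe A 6 7 * s + cGa A 6 7 * t + cDe A 6 7 * s * t = 0 ∧
      L = affineSpan ℝ {(fun i => A 0 i + s * (A 1 i - A 0 i)),
                        (fun i => A 2 i + t * (A 3 i - A 2 i))} := by
  obtain ⟨p, hpL, hpseg⟩ := h2
  obtain ⟨q, hqL, hqseg⟩ := h3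
  obtain ⟨s, hs⟩ := seg_param hpseg
  obtain ⟨t, ht⟩ := seg_param hqseg
  have hpq : p ≠ q := by
    intro h
    apply hskew
    unfold pSkew
    apply det3_comb1 _ _ _ s (-t)
    intro i
    have e1 := hs i
    have e2 := ht i
    have e3 : p i = q i := by rw [h]
    linear_combination e1 - e2 - e3
  have hL : L = affineSpan ℝ {p, q} := line_eq hrk hpL hqL hpq
  obtain ⟨r, hrL, hrseg⟩ := h4
  obtain ⟨mu, hmu⟩ := seg_param hrseg
  rw [hL] at hrL
  obtain ⟨lam, hlam⟩ := mem_line_param hrL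
  have hF : det3 (fun i => q i - p i) (fun i => A 4 i - p i) (fun i => A 5 i - p i) = 0 := by
    apply det3_comb23 _ _ _ lam mu
    intro i
    linear_combination hlam i - hmu i
  obtain ⟨r', hrL', hrseg'⟩ := h5
  obtain ⟨mu', hmu'⟩ := seg_param hrseg'
  rw [hL] at hrL'
  obtain ⟨lam', hlam'⟩ := mem_line_param hrL'
  have hG : det3 (fun i => q i - p i) (fun i => A 6 i - p i) (fun i => A 7 i - p i) = 0 := by
    apply det3_comb23 _ _ _ lam' mu'
    intro i
    linear_combination hlam' i - hmu' i
  have hp' : p = fun i => A 0 i + s * (A 1 i - A 0 i) := funext hs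
  have hq' : q = fun i => A 2 i + t * (A 3 i - A 2 i) := funext ht
  refine ⟨s, t, ?_, ?_, ?_⟩
  · rw [← Fbil A 4 5 s t p q hs ht]
    exact hF
  · rw [← Fbil A 6 7 s t p q hs ht]
    exact hG
  · rw [hL, hp', hq']
/-- Corollary 3.13: if the 24 coordinates of eight points `A 0, …, A 7` of `ℝ³` form a
family that is algebraically independent over `ℚ`, then at most two affine lines in `ℝ³`
meet each of the closed segments `[A 0, A 1]`, `[A 2, A 3]`, `[A 4, A 5]`, `[A 6, A 7]`. -/
theorem stmt_11 (A : Fin 8 → (Fin 3 → ℝ))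
    (hA : AlgebraicIndependent ℚ (fun p : Fin 8 × Fin 3 => A p.1 p.2)) :
    ∃ L1 L2 : AffineSubspace ℝ (Fin 3 → ℝ),
      ∀ L : AffineSubspace ℝ (Fin 3 → ℝ),
        (L : Set (Fin 3 → ℝ)).Nonempty → finrank ℝ L.direction = 1 →
        ((L : Set (Fin 3 → ℝ)) ∩ segment ℝ (A 0) (A 1)).Nonempty →
        ((L : Set (Fin 3 → ℝ)) ∩ segment ℝ (A 2) (A 3)).Nonempty →
        ((L : Set (Fin 3 → ℝ)) ∩ segment ℝ (A 4) (A 5)).Nonempty →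
        ((L : Set (Fin 3 → ℝ)) ∩ segment ℝ (A 6) (A 7)).Nonempty →
        L = L1 ∨ L = L2 := by
  classical
  have hskew : pSkew A ≠ 0 := A_ne_skew hA
  have hc2 : pC2 A ≠ 0 := A_ne_c2 hA
  have hc3 : pC3 A ≠ 0 := A_ne_c3 hA
  -- uniqueness of `t` given `s`
  have tuniq : ∀ s t t' : ℝ,
      cAl A 4 5 + cBe A 4 5 * s + cGa A 4 5 * t + cDe A 4 5 * s * t = 0 →
      cAl A 6 7 + cBe A 6 7 * s + cGa A 6 7 * t + cDe A 6 7 * s * t = 0 →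
      cAl A 4 5 + cBe A 4 5 * s + cGa A 4 5 * t' + cDe A 4 5 * s * t' = 0 →
      cAl A 6 7 + cBe A 6 7 * s + cGa A 6 7 * t' + cDe A 6 7 * s * t' = 0 →
      t = t' := by
    intro s t t' e1 e2 e1' e2'
    by_contra hne
    have hsub := sub_ne_zero.2 hne
    have k1 : (cGa A 4 5 + cDe A 4 5 * s) * (t - t') = 0 := by linear_combination e1 - e1'
    have k2 : (cGa A 6 7 + cDe A 6 7 * s) * (t - t') = 0 := by linear_combination e2 - e2'
    have g1 := (mul_eq_zero.1 k1).resolve_right hsub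
    have g2 := (mul_eq_zero.1 k2).resolve_right hsub
    apply hc3
    unfold pC3
    linear_combination cDe A 6 7 * g1 - cDe A 4 5 * g2
  -- every parameter pair gives a root of a fixed quadratic
  have root : ∀ s t : ℝ,
      cAl A 4 5 + cBe A 4 5 * s + cGa A 4 5 * t + cDe A 4 5 * s * t = 0 →
      cAl A 6 7 + cBe A 6 7 * s + cGa A 6 7 * t + cDe A 6 7 * s * t = 0 →
      (cAl A 4 5 * cGa A 6 7 - cAl A 6 7 * cGa A 4 5)
        + (cAl A 4 5 * cDe A 6 7 + cBe A 4 5 * cGa A 6 7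
            - cAl A 6 7 * cDe A 4 5 - cBe A 6 7 * cGa A 4 5) * s
        + (cBe A 4 5 * cDe A 6 7 - cBe A 6 7 * cDe A 4 5) * s ^ 2 = 0 := by
    intro s t e1 e2
    linear_combination (cGa A 6 7 + cDe A 6 7 * s) * e1 - (cGa A 4 5 + cDe A 4 5 * s) * e2
  have hc2' : cBe A 4 5 * cDe A 6 7 - cBe A 6 7 * cDe A 4 5 ≠ 0 := by
    intro h
    exact hc2 (by unfold pC2; linear_combination h)
  by_cases hex : ∃ L0 : AffineSubspace ℝ (Fin 3 → ℝ),
      (L0 : Set (Fin 3 → ℝ)).Nonempty ∧ finrank ℝ L0.direction = 1 ∧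
      ((L0 : Set (Fin 3 → ℝ)) ∩ segment ℝ (A 0) (A 1)).Nonempty ∧
      ((L0 : Set (Fin 3 → ℝ)) ∩ segment ℝ (A 2) (A 3)).Nonempty ∧
      ((L0 : Set (Fin 3 → ℝ)) ∩ segment ℝ (A 4) (A 5)).Nonempty ∧
      ((L0 : Set (Fin 3 → ℝ)) ∩ segment ℝ (A 6) (A 7)).Nonempty
  · obtain ⟨L1, hL1⟩ := hex
    by_cases hex2 : ∃ L0 : AffineSubspace ℝ (Fin 3 → ℝ),
        ((L0 : Set (Fin 3 → ℝ)).Nonempty ∧ finrank ℝ L0.direction = 1 ∧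
        ((L0 : Set (Fin 3 → ℝ)) ∩ segment ℝ (A 0) (A 1)).Nonempty ∧
        ((L0 : Set (Fin 3 → ℝ)) ∩ segment ℝ (A 2) (A 3)).Nonempty ∧
        ((L0 : Set (Fin 3 → ℝ)) ∩ segment ℝ (A 4) (A 5)).Nonempty ∧
        ((L0 : Set (Fin 3 → ℝ)) ∩ segment ℝ (A 6) (A 7)).Nonempty) ∧ L0 ≠ L1
    · obtain ⟨L2, hL2, hL2ne⟩ := hex2
      refine ⟨L1, L2, ?_⟩
      intro L ha hb hc hd he hf
      by_contra hcon
      push_neg at hcon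
      obtain ⟨s, t, e1, e2, hsp⟩ := key A hskew L hb hc hd he hf
      obtain ⟨s1, t1, f1, f2, hsp1⟩ :=
        key A hskew L1 hL1.2.1 hL1.2.2.1 hL1.2.2.2.1 hL1.2.2.2.2.1 hL1.2.2.2.2.2
      obtain ⟨s2, t2, g1, g2, hsp2⟩ :=
        key A hskew L2 hL2.2.1 hL2.2.2.1 hL2.2.2.2.1 hL2.2.2.2.2.1 hL2.2.2.2.2.2
      have hss1 : s ≠ s1 := by
        intro hEq
        apply hcon.1
        rw [← hEq] at f1 f2 hsp1
        have htEq : t = t1 := tuniq s t t1 e1 e2 f1 f2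
        rw [← htEq] at hsp1
        exact hsp.trans hsp1.symm
      have hss2 : s ≠ s2 := by
        intro hEq
        apply hcon.2
        rw [← hEq] at g1 g2 hsp2
        have htEq : t = t2 := tuniq s t t2 e1 e2 g1 g2
        rw [← htEq] at hsp2
        exact hsp.trans hsp2.symm
      have hs12 : s1 = s2 :=
        quad_roots hc2' (root s t e1 e2) (root s1 t1 f1 f2) (root s2 t2 g1 g2) hss1 hss2
      apply hL2ne
      rw [← hs12] at g1 g2 hsp2
      have htEq : t1 = t2 := tuniq s1 t1 t2 f1 f2 g1 g2
      rw [← htEq] at hsp2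
      exact hsp2.trans hsp1.symm
    · refine ⟨L1, L1, ?_⟩
      intro L ha hb hc hd he hf
      left
      by_contra hne
      exact hex2 ⟨L, ⟨ha, hb, hc, hd, he, hf⟩, hne⟩
  · refine ⟨⊥, ⊥, ?_⟩
    intro L ha hb hc hd he hf
    exact absurd ⟨L, ha, hb, hc, hd, he, hf⟩ hex
end

section
/- Let L1, L2, L3 be three affine lines (1-dimensional affine subspaces) in ℝ³. Then there exists a nonzero polynomial p in three real variables of total degree at most 2 such that p vanishes at every point of L1 ∪ L2 ∪ L3. -/
open Module
set_option maxRecDepth 8000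

namespace Stmt13Aux

lemma mv_aeval_eq_eval (p : MvPolynomial (Fin 3) ℝ) (x : Fin 3 → ℝ) :
    MvPolynomial.aeval x p = MvPolynomial.eval x p := by
  rw [MvPolynomial.aeval_def, MvPolynomial.eval, Algebra.algebraMap_self]
  rfl

lemma p_aeval_eq_eval (q : Polynomial ℝ) (t : ℝ) :
    Polynomial.aeval t q = q.eval t := by
  rw [Polynomial.aeval_def, Polynomial.eval, Algebra.algebraMap_self]

open Polynomial in
lemma natDegree_aeval_le (p : MvPolynomial (Fin 3) ℝ) (f : Fin 3 → Polynomial ℝ)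
    (hf : ∀ i, (f i).natDegree ≤ 1) :
    (MvPolynomial.aeval f p).natDegree ≤ p.totalDegree := by
  rw [MvPolynomial.aeval_def, MvPolynomial.eval₂_eq']
  refine Polynomial.natDegree_sum_le_of_forall_le _ _ ?_
  intro d hd
  refine (Polynomial.natDegree_mul_le).trans ?_
  have h1 : (algebraMap ℝ (Polynomial ℝ) (MvPolynomial.coeff d p)).natDegree = 0 := by
    simp [Polynomial.algebraMap_eq]
  rw [h1, zero_add]
  refine (Polynomial.natDegree_prod_le _ _).trans ?_
  have h2 : ∑ i : Fin 3, ((f i) ^ (d i)).natDegree ≤ ∑ i : Fin 3, d i := by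
    refine Finset.sum_le_sum fun i _ => ?_
    calc ((f i) ^ (d i)).natDegree ≤ (d i) * (f i).natDegree :=
          Polynomial.natDegree_pow_le
      _ ≤ (d i) * 1 := Nat.mul_le_mul_left _ (hf i)
      _ = d i := Nat.mul_one _
  refine h2.trans ?_
  have h3 : ∑ i : Fin 3, d i = d.sum fun _ e => e := by
    rw [Finsupp.sum_fintype]
    intro i; rfl
  rw [h3]
  exact MvPolynomial.le_totalDegree hd

lemma vanish_on_line (p : MvPolynomial (Fin 3) ℝ) (hp : p.totalDegree ≤ 2)
    (a d : Fin 3 → ℝ)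
    (hv : ∀ k : Fin 3, MvPolynomial.eval (a + (k.1 : ℝ) • d) p = 0) :
    ∀ t : ℝ, MvPolynomial.eval (a + t • d) p = 0 := by
  set f : Fin 3 → Polynomial ℝ := fun i =>
    Polynomial.C (a i) + Polynomial.C (d i) * Polynomial.X with hf
  set q : Polynomial ℝ := MvPolynomial.aeval f p with hq
  have hfd : ∀ i, (f i).natDegree ≤ 1 := by
    intro i
    refine (Polynomial.natDegree_add_le _ _).trans (max_le (by simp) ?_)
    exact (Polynomial.natDegree_mul_le).trans (by simp)
  have hdeg : q.natDegree ≤ 2 := (natDegree_aeval_le p f hfd).trans hp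
  have hev : ∀ t : ℝ, q.eval t = MvPolynomial.eval (a + t • d) p := by
    intro t
    have h1 : Polynomial.aeval t q
        = MvPolynomial.aeval (fun i => Polynomial.aeval t (f i)) p := by
      rw [hq, ← AlgHom.comp_apply, MvPolynomial.comp_aeval]
    have h2 : (fun i => Polynomial.aeval t (f i)) = a + t • d := by
      funext i
      simp only [hf, map_add, map_mul, Polynomial.aeval_C, Polynomial.aeval_X, Pi.add_apply,
        Pi.smul_apply, smul_eq_mul, Algebra.algebraMap_self_apply]
      ring
    rw [h2, mv_aeval_eq_eval, p_aeval_eq_eval] at h1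
    exact h1
  have hq0 : q = 0 := by
    refine Polynomial.eq_zero_of_natDegree_lt_card_of_eval_eq_zero q
      (f := fun k : Fin 3 => (k.1 : ℝ)) ?_ ?_ ?_
    · intro i j hij
      exact Fin.val_injective (Nat.cast_injective hij)
    · intro k
      rw [hev]
      exact hv k
    · simpa using Nat.lt_succ_of_le hdeg
  intro t
  rw [← hev t, hq0, Polynomial.eval_zero]

lemma line_param (L : AffineSubspace ℝ (Fin 3 → ℝ)) (hne : (L : Set (Fin 3 → ℝ)).Nonempty)
    (hr : finrank ℝ L.direction = 1) :
    ∃ a d : Fin 3 → ℝ, (∀ t : ℝ, a + t • d ∈ L) ∧ ∀ x ∈ L, ∃ t : ℝ, x = a + t • d := by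
  obtain ⟨a, ha⟩ := hne
  obtain ⟨v, hv0, hv⟩ := finrank_eq_one_iff'.mp hr
  refine ⟨a, (v : Fin 3 → ℝ), ?_, ?_⟩
  · intro t
    have h1 : (t • (v : Fin 3 → ℝ)) ∈ L.direction := Submodule.smul_mem _ t v.2
    have h2 := AffineSubspace.vadd_mem_of_mem_direction h1 ha
    simpa [vadd_eq_add, add_comm] using h2
  · intro x hx
    have hxa : x - a ∈ L.direction := by
      simpa [vsub_eq_sub] using AffineSubspace.vsub_mem_direction hx ha
    obtain ⟨c, hc⟩ := hv ⟨x - a, hxa⟩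
    refine ⟨c, ?_⟩
    have h3 : c • (v : Fin 3 → ℝ) = x - a := congrArg Subtype.val hc
    rw [h3]
    abel

end Stmt13Aux

/-- Existence part of Proposition 3.12(a): for any three affine lines in `ℝ³` there is a
nonzero polynomial `p ∈ ℝ[x, y, z]` of total degree at most `2` vanishing on all three. -/
theorem stmt_13 (L1 L2 L3 : AffineSubspace ℝ (Fin 3 → ℝ))
    (h1ne : (L1 : Set (Fin 3 → ℝ)).Nonempty) (h1 : finrank ℝ L1.direction = 1)
    (h2ne : (L2 : Set (Fin 3 → ℝ)).Nonempty) (h2 : finrank ℝ L2.direction = 1)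
    (h3ne : (L3 : Set (Fin 3 → ℝ)).Nonempty) (h3 : finrank ℝ L3.direction = 1) :
    ∃ p : MvPolynomial (Fin 3) ℝ, p ≠ 0 ∧ p.totalDegree ≤ 2 ∧
      ∀ x ∈ (L1 : Set (Fin 3 → ℝ)) ∪ L2 ∪ L3, MvPolynomial.eval x p = 0 := by
  classical
  obtain ⟨a1, d1, hmem1, hsur1⟩ := Stmt13Aux.line_param L1 h1ne h1
  obtain ⟨a2, d2, hmem2, hsur2⟩ := Stmt13Aux.line_param L2 h2ne h2
  obtain ⟨a3, d3, hmem3, hsur3⟩ := Stmt13Aux.line_param L3 h3ne h3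
  set A : Fin 3 → (Fin 3 → ℝ) := ![a1, a2, a3] with hA
  set D : Fin 3 → (Fin 3 → ℝ) := ![d1, d2, d3] with hD
  set pt : Fin 3 × Fin 3 → (Fin 3 → ℝ) :=
    fun ik => A ik.1 + (ik.2.1 : ℝ) • D ik.1 with hpt
  -- the ten monomials of degree ≤ 2
  set v : Fin 10 → (Fin 3 → ℕ) :=
    ![![0,0,0], ![1,0,0], ![0,1,0], ![0,0,1], ![2,0,0],
      ![0,2,0], ![0,0,2], ![1,1,0], ![1,0,1], ![0,1,1]] with hv
  have hvinj : Function.Injective v := by decide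
  have hvsum : ∀ j, ∑ i : Fin 3, v j i ≤ 2 := by decide
  set s : Fin 10 → (Fin 3 →₀ ℕ) := fun j => Finsupp.equivFunOnFinite.symm (v j) with hs
  have hsinj : Function.Injective s :=
    Finsupp.equivFunOnFinite.symm.injective.comp hvinj
  set m : Fin 10 → MvPolynomial (Fin 3) ℝ :=
    fun j => MvPolynomial.monomial (s j) 1 with hm
  have hmli : LinearIndependent ℝ m := by
    have := (MvPolynomial.basisMonomials (Fin 3) ℝ).linearIndependent.comp s hsinj
    exact this
  have hmdeg : ∀ j, (m j).totalDegree ≤ 2 := by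
    intro j
    rw [hm, MvPolynomial.totalDegree_monomial _ (one_ne_zero (α := ℝ))]
    have : (s j).sum (fun _ e => e) = ∑ i : Fin 3, v j i := by
      rw [Finsupp.sum_fintype]
      · simp [hs]
      · intro i; rfl
    rw [this]
    exact hvsum j
  have key : ∃ p : MvPolynomial (Fin 3) ℝ, p ≠ 0 ∧ p.totalDegree ≤ 2 ∧
      ∀ ik : Fin 3 × Fin 3, MvPolynomial.eval (pt ik) p = 0 := by
    by_contra hcon
    push_neg at hcon
    set T : (Fin 10 → ℝ) →ₗ[ℝ] MvPolynomial (Fin 3) ℝ :=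
      Fintype.linearCombination ℝ m with hT
    set E : MvPolynomial (Fin 3) ℝ →ₗ[ℝ] (Fin 3 × Fin 3 → ℝ) :=
      LinearMap.pi fun ik => (MvPolynomial.aeval (pt ik)).toLinearMap with hE
    have hinj : Function.Injective (E ∘ₗ T) := by
      rw [← LinearMap.ker_eq_bot, LinearMap.ker_eq_bot']
      intro c hc
      by_contra hc0
      have hTc : T c ≠ 0 := by
        intro h0
        apply hc0
        have h1 := Fintype.linearIndependent_iff.mp hmli c
          (by simpa [hT, Fintype.linearCombination_apply] using h0)
        funext i; exact h1 i
      have hTdeg : (T c).totalDegree ≤ 2 := by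
        rw [hT]
        simp only [Fintype.linearCombination_apply]
        refine (MvPolynomial.totalDegree_finset_sum _ _).trans ?_
        refine Finset.sup_le fun j _ => ?_
        exact (MvPolynomial.totalDegree_smul_le _ _).trans (hmdeg j)
      obtain ⟨ik, hik⟩ := hcon (T c) hTc hTdeg
      apply hik
      have h2 := congrFun hc ik
      rw [← Stmt13Aux.mv_aeval_eq_eval]
      simpa [hE] using h2
    have hle := LinearMap.finrank_le_finrank_of_injective hinj
    simp [Module.finrank_pi] at hle
  obtain ⟨p, hp0, hpdeg, hpvan⟩ := key
  refine ⟨p, hp0, hpdeg, ?_⟩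
  intro x hx
  rcases hx with (hx | hx) | hx
  · obtain ⟨t, rfl⟩ := hsur1 x hx
    refine Stmt13Aux.vanish_on_line p hpdeg a1 d1 (fun k => ?_) t
    have := hpvan (0, k)
    simpa [hpt, hA, hD] using this
  · obtain ⟨t, rfl⟩ := hsur2 x hx
    refine Stmt13Aux.vanish_on_line p hpdeg a2 d2 (fun k => ?_) t
    have := hpvan (1, k)
    simpa [hpt, hA, hD] using this
  · obtain ⟨t, rfl⟩ := hsur3 x hx
    refine Stmt13Aux.vanish_on_line p hpdeg a3 d3 (fun k => ?_) t
    have := hpvan (2, k)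
    simpa [hpt, hA, hD] using this
end

section
/- Let L1, L2, L3 be three pairwise skew affine lines in ℝ³, i.e., for i ≠ j the affine span of Li ∪ Lj is all of ℝ³ (equivalently, Li and Lj are disjoint and non-parallel). Let p be a polynomial in three real variables of total degree at most 2 vanishing at every point of L1 ∪ L2 ∪ L3. Then every affine line L in ℝ³ that meets each of L1, L2, L3 is contained in the zero set of p. -/
open Module

/-- Two skew lines in ℝ³ are disjoint. -/
lemma skew_disjoint_aux (L1 L2 : AffineSubspace ℝ (Fin 3 → ℝ))
    (h1 : finrank ℝ L1.direction = 1) (h2 : finrank ℝ L2.direction = 1)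
    (hskew : affineSpan ℝ ((L1 : Set (Fin 3 → ℝ)) ∪ L2) = ⊤) :
    ∀ c, c ∈ L1 → c ∉ L2 := by
  intro c hc1 hc2
  have hsup : L1 ⊔ L2 = ⊤ := by
    rw [← hskew, AffineSubspace.span_union, AffineSubspace.affineSpan_coe,
      AffineSubspace.affineSpan_coe]
  have hdir : (L1 ⊔ L2).direction = L1.direction ⊔ L2.direction ⊔ ℝ ∙ (c -ᵥ c) :=
    AffineSubspace.direction_sup hc1 hc2
  rw [vsub_self, Submodule.span_zero_singleton, sup_bot_eq, hsup,
    AffineSubspace.direction_top] at hdir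
  have h3 : finrank ℝ (⊤ : Submodule ℝ (Fin 3 → ℝ)) = 3 := by
    simp [finrank_top]
  have hle : finrank ℝ (L1.direction ⊔ L2.direction : Submodule ℝ (Fin 3 → ℝ)) ≤ 2 := by
    have := Submodule.finrank_add_le_finrank_add_finrank L1.direction L2.direction
    omega
  rw [← hdir, h3] at hle
  omega

lemma natDegree_aeval_line (p : MvPolynomial (Fin 3) ℝ) (a v : Fin 3 → ℝ) :
    (MvPolynomial.aeval (fun i => Polynomial.C (a i) + Polynomial.C (v i) * Polynomial.X) p :
      Polynomial ℝ).natDegree ≤ p.totalDegree := by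
  conv_lhs => rw [p.as_sum]
  rw [map_sum]
  refine (Polynomial.natDegree_sum_le _ _).trans ?_
  rw [Finset.fold_max_le]
  refine ⟨Nat.zero_le _, fun d hd => ?_⟩
  rw [Function.comp_apply, MvPolynomial.aeval_monomial]
  refine (Polynomial.natDegree_mul_le).trans ?_
  have h1 : (algebraMap ℝ (Polynomial ℝ) (MvPolynomial.coeff d p)).natDegree = 0 :=
    Polynomial.natDegree_C _
  rw [h1, zero_add]
  refine (Polynomial.natDegree_prod_le _ _).trans ?_
  refine le_trans ?_ (MvPolynomial.le_totalDegree hd)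
  refine Finset.sum_le_sum fun i _ => ?_
  refine (Polynomial.natDegree_pow_le).trans ?_
  have : (Polynomial.C (a i) + Polynomial.C (v i) * Polynomial.X).natDegree ≤ 1 := by
    refine (Polynomial.natDegree_add_le _ _).trans ?_
    simp [Polynomial.natDegree_C_mul_le]
    exact (Polynomial.natDegree_C_mul_le _ _).trans (by simp)
  calc d i * (Polynomial.C (a i) + Polynomial.C (v i) * Polynomial.X).natDegree
      ≤ d i * 1 := Nat.mul_le_mul_left _ this
    _ = d i := mul_one _

lemma eval_aeval_line (p : MvPolynomial (Fin 3) ℝ) (a v : Fin 3 → ℝ) (t : ℝ) :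
    Polynomial.eval t
      (MvPolynomial.aeval (fun i => Polynomial.C (a i) + Polynomial.C (v i) * Polynomial.X) p) =
    MvPolynomial.eval (a + t • v) p := by
  rw [MvPolynomial.aeval_def]
  have h := MvPolynomial.eval₂_comp_left (Polynomial.evalRingHom t) (algebraMap ℝ (Polynomial ℝ))
    (fun i => Polynomial.C (a i) + Polynomial.C (v i) * Polynomial.X) p
  simp only [Polynomial.coe_evalRingHom] at h
  rw [h]
  have hF : (Polynomial.evalRingHom t).comp (algebraMap ℝ (Polynomial ℝ)) = RingHom.id ℝ := by
    ext r; simp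
  have hg : (Polynomial.eval t ∘ fun i => Polynomial.C (a i) + Polynomial.C (v i) * Polynomial.X)
      = (a + t • v) := by
    funext i; simp; ring
  rw [hF, hg]
  rfl

/-- Proposition 3.12(b): let `L1`, `L2`, `L3` be pairwise skew affine lines in `ℝ³` (the
affine span of the union of any two of them is all of `ℝ³`), and let `p ∈ ℝ[x, y, z]` of
total degree at most `2` vanish on `L1 ∪ L2 ∪ L3`. Then every affine line meeting each of
`L1`, `L2`, `L3` is contained in the zero set of `p`. -/
theorem stmt_14 (L1 L2 L3 : AffineSubspace ℝ (Fin 3 → ℝ))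
    (h1ne : (L1 : Set (Fin 3 → ℝ)).Nonempty) (h1 : finrank ℝ L1.direction = 1)
    (h2ne : (L2 : Set (Fin 3 → ℝ)).Nonempty) (h2 : finrank ℝ L2.direction = 1)
    (h3ne : (L3 : Set (Fin 3 → ℝ)).Nonempty) (h3 : finrank ℝ L3.direction = 1)
    (hskew12 : affineSpan ℝ ((L1 : Set (Fin 3 → ℝ)) ∪ L2) = ⊤)
    (hskew13 : affineSpan ℝ ((L1 : Set (Fin 3 → ℝ)) ∪ L3) = ⊤)
    (hskew23 : affineSpan ℝ ((L2 : Set (Fin 3 → ℝ)) ∪ L3) = ⊤)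
    (p : MvPolynomial (Fin 3) ℝ) (hdeg : p.totalDegree ≤ 2)
    (hvanish : ∀ x ∈ (L1 : Set (Fin 3 → ℝ)) ∪ L2 ∪ L3, MvPolynomial.eval x p = 0)
    (L : AffineSubspace ℝ (Fin 3 → ℝ))
    (hLne : (L : Set (Fin 3 → ℝ)).Nonempty) (hL : finrank ℝ L.direction = 1)
    (hL1 : ((L : Set (Fin 3 → ℝ)) ∩ L1).Nonempty)
    (hL2 : ((L : Set (Fin 3 → ℝ)) ∩ L2).Nonempty)
    (hL3 : ((L : Set (Fin 3 → ℝ)) ∩ L3).Nonempty) :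
    ∀ x ∈ (L : Set (Fin 3 → ℝ)), MvPolynomial.eval x p = 0 := by
  obtain ⟨a, ha⟩ := hLne
  -- direction vector of L
  obtain ⟨v, hv0, hvspan⟩ := (finrank_eq_one_iff' (K := ℝ) (V := L.direction)).mp hL
  -- every point of L has the form a + t • v
  have hparam : ∀ x ∈ (L : Set (Fin 3 → ℝ)), ∃ t : ℝ, x = a + t • (v : Fin 3 → ℝ) := by
    intro x hx
    have hxa : x -ᵥ a ∈ L.direction := AffineSubspace.vsub_mem_direction hx ha
    obtain ⟨c, hc⟩ := hvspan ⟨x -ᵥ a, hxa⟩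
    refine ⟨c, ?_⟩
    have hvv : c • (v : Fin 3 → ℝ) = x -ᵥ a := congrArg Subtype.val hc
    rw [vsub_eq_sub] at hvv
    rw [hvv]
    abel
  obtain ⟨x1, hx1L, hx1⟩ := hL1
  obtain ⟨x2, hx2L, hx2⟩ := hL2
  obtain ⟨x3, hx3L, hx3⟩ := hL3
  obtain ⟨t1, ht1⟩ := hparam x1 hx1L
  obtain ⟨t2, ht2⟩ := hparam x2 hx2L
  obtain ⟨t3, ht3⟩ := hparam x3 hx3L
  have hvne : (v : Fin 3 → ℝ) ≠ 0 := fun h => hv0 (Subtype.ext h)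
  -- distinctness of t1 t2 t3
  have h12 : x1 ≠ x2 := fun h => skew_disjoint_aux L1 L2 h1 h2 hskew12 x1 hx1 (h ▸ hx2)
  have h13 : x1 ≠ x3 := fun h => skew_disjoint_aux L1 L3 h1 h3 hskew13 x1 hx1 (h ▸ hx3)
  have h23 : x2 ≠ x3 := fun h => skew_disjoint_aux L2 L3 h2 h3 hskew23 x2 hx2 (h ▸ hx3)
  have ht12 : t1 ≠ t2 := fun h => h12 (by rw [ht1, ht2, h])
  have ht13 : t1 ≠ t3 := fun h => h13 (by rw [ht1, ht3, h])
  have ht23 : t2 ≠ t3 := fun h => h23 (by rw [ht2, ht3, h])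
  set q : Polynomial ℝ :=
    MvPolynomial.aeval (fun i => Polynomial.C (a i) + Polynomial.C ((v : Fin 3 → ℝ) i) *
      Polynomial.X) p with hq
  have hqdeg : q.natDegree ≤ 2 := (natDegree_aeval_line p a _).trans hdeg
  have hqeval : ∀ t : ℝ, q.eval t = MvPolynomial.eval (a + t • (v : Fin 3 → ℝ)) p :=
    fun t => eval_aeval_line p a _ t
  have hqzero : q = 0 := by
    have hf : Function.Injective (![t1, t2, t3]) := by
      intro i j hij
      fin_cases i <;> fin_cases j <;> simp_all <;> tauto
    refine Polynomial.eq_zero_of_natDegree_lt_card_of_eval_eq_zero q hf ?_ ?_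
    · intro i
      fin_cases i
      · show Polynomial.eval t1 q = 0
        rw [hqeval, ← ht1]
        exact hvanish x1 (Or.inl (Or.inl hx1))
      · show Polynomial.eval t2 q = 0
        rw [hqeval, ← ht2]
        exact hvanish x2 (Or.inl (Or.inr hx2))
      · show Polynomial.eval t3 q = 0
        rw [hqeval, ← ht3]
        exact hvanish x3 (Or.inr hx3)
    · simpa using lt_of_le_of_lt hqdeg (by norm_num : (2 : ℕ) < 3)
  intro x hx
  obtain ⟨t, ht⟩ := hparam x hx
  rw [ht, ← hqeval, hqzero, Polynomial.eval_zero]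
end

section
/- Let X be a compact metric space, let B1, …, Bq be pairwise disjoint closed subsets of X, and let 0 ≤ d ≤ m be integers. For g ∈ C(X, ℝ^m) let C_Γ(g) be the set of all tuples (y1, …, yq) ∈ (ℝ^m)^q such that y1, …, yq lie in a common d-dimensional affine subspace of ℝ^m (their affine span has dimension ≤ d) and for each i there exists xi ∈ Bi with g(xi) = yi. Then: (1) C_Γ(g) is a compact subset of (ℝ^m)^q for every g ∈ C(X, ℝ^m); and (2) for every open set W ⊆ (ℝ^m)^q, the set {g ∈ C(X, ℝ^m) : C_Γ(g) ⊆ W} is open in C(X, ℝ^m). -/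
open Module

/-- `CGamma B d g` is the set of tuples `(y 0, …, y (q-1)) ∈ (ℝ^m)^q` lying in a common
`d`-dimensional affine subspace of `ℝ^m` (i.e., whose affine span has dimension at most `d`)
and such that for each `i` there is `x i ∈ B i` with `g (x i) = y i`. -/
def CGamma {X : Type*} [TopologicalSpace X] {q m : ℕ} (B : Fin q → Set X) (d : ℕ)
    (g : C(X, Fin m → ℝ)) : Set (Fin q → Fin m → ℝ) :=
  {y | finrank ℝ (affineSpan ℝ (Set.range y)).direction ≤ d ∧
    ∀ i, ∃ x ∈ B i, g x = y i}


lemma finrank_vectorSpan_le_iff_aux {m q d : ℕ} (y : Fin q → Fin m → ℝ) :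
    finrank ℝ (vectorSpan ℝ (Set.range y)) ≤ d ↔
      ∀ ij : Fin (d + 1) → Fin q × Fin q,
        ¬ LinearIndependent ℝ (fun k => y (ij k).1 - y (ij k).2) := by
  constructor
  · intro h ij hli
    have hmem : ∀ k, y (ij k).1 - y (ij k).2 ∈ vectorSpan ℝ (Set.range y) := by
      intro k
      exact
        vsub_mem_vectorSpan ℝ (Set.mem_range_self (ij k).1) (Set.mem_range_self (ij k).2)
    have hle : Submodule.span ℝ (Set.range fun k => y (ij k).1 - y (ij k).2)
        ≤ vectorSpan ℝ (Set.range y) := by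
      rw [Submodule.span_le]
      rintro v ⟨k, rfl⟩
      exact hmem k
    have h1 := finrank_span_eq_card hli
    have h2 := Submodule.finrank_mono hle
    simp [h1, Fintype.card_fin] at h2
    omega
  · intro h
    by_contra hgt
    push_neg at hgt
    set S : Set (Fin m → ℝ) := {v | ∃ i j, y i - y j = v} with hS
    have hspanS : vectorSpan ℝ (Set.range y) = Submodule.span ℝ S := by
      rw [vectorSpan_def]
      congr 1
      ext v
      constructor
      · rintro ⟨_, ⟨i, rfl⟩, _, ⟨j, rfl⟩, rfl⟩
        exact ⟨i, j, rfl⟩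
      · rintro ⟨i, j, rfl⟩
        exact ⟨y i, Set.mem_range_self i, y j, Set.mem_range_self j, rfl⟩
    obtain ⟨b, hbS, hbspan, hbli⟩ := exists_linearIndependent ℝ S
    have hbfin : b.Finite := hbli.setFinite
    haveI : Fintype b := hbfin.fintype
    have hcard : finrank ℝ (Submodule.span ℝ b) = b.toFinset.card :=
      finrank_span_set_eq_card hbli
    have hdlt : d + 1 ≤ Fintype.card b := by
      rw [hspanS, ← hbspan, hcard] at hgt
      rw [Set.toFinset_card] at hgt
      omega
    obtain ⟨e⟩ : Nonempty (Fin (d + 1) ↪ b) := by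
      rw [Function.Embedding.nonempty_iff_card_le]
      simpa using hdlt
    have hli' : LinearIndependent ℝ (fun k : Fin (d + 1) => ((e k : b) : Fin m → ℝ)) :=
      hbli.comp e e.injective
    have hchoice : ∀ k : Fin (d + 1), ∃ p : Fin q × Fin q, y p.1 - y p.2 = ((e k : b) : Fin m → ℝ) := by
      intro k
      obtain ⟨i, j, hij⟩ := hbS (e k).2
      exact ⟨(i, j), hij⟩
    choose ij hij using hchoice
    exact h ij (by simpa [hij] using hli')

lemma isClosed_dimset {m q : ℕ} (d : ℕ) :
    IsClosed {y : Fin q → Fin m → ℝ | finrank ℝ (affineSpan ℝ (Set.range y)).direction ≤ d} := by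
  have : {y : Fin q → Fin m → ℝ | finrank ℝ (affineSpan ℝ (Set.range y)).direction ≤ d} =
      ⋂ ij : Fin (d + 1) → Fin q × Fin q,
        {y : Fin q → Fin m → ℝ | LinearIndependent ℝ (fun k => y (ij k).1 - y (ij k).2)}ᶜ := by
    ext y
    simp only [Set.mem_setOf_eq, Set.mem_iInter, Set.mem_compl_iff]
    rw [direction_affineSpan]
    exact finrank_vectorSpan_le_iff_aux y
  rw [this]
  refine isClosed_iInter fun ij => IsOpen.isClosed_compl ?_
  have hc : Continuous fun y : Fin q → Fin m → ℝ =>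
      (fun k : Fin (d + 1) => y (ij k).1 - y (ij k).2) := by
    refine continuous_pi fun k => Continuous.sub ?_ ?_ <;> exact continuous_apply _
  exact isOpen_setOf_linearIndependent.preimage hc


/-- The `C`-set analogue of Proposition 2.1: for a compact metric space `X`, pairwise
disjoint closed sets `B 0, …, B (q-1) ⊆ X` and `0 ≤ d ≤ m`, the assignment `g ↦ C_Γ(g)` is
compact-valued, and `{g : C_Γ(g) ⊆ W}` is open in `C(X, ℝ^m)` for every open
`W ⊆ (ℝ^m)^q`. -/
theorem stmt_19 (X : Type*) [MetricSpace X] [CompactSpace X] (q d m : ℕ) (hdm : d ≤ m)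
    (B : Fin q → Set X) (hBclosed : ∀ i, IsClosed (B i))
    (hBdisj : Pairwise fun i j => Disjoint (B i) (B j)) :
    (∀ g : C(X, Fin m → ℝ), IsCompact (CGamma B d g)) ∧
    (∀ W : Set (Fin q → Fin m → ℝ), IsOpen W →
      IsOpen {g : C(X, Fin m → ℝ) | CGamma B d g ⊆ W}) := by
  set F : Set (Fin q → Fin m → ℝ) :=
    {y | finrank ℝ (affineSpan ℝ (Set.range y)).direction ≤ d} with hF
  have hFclosed : IsClosed F := isClosed_dimset d
  set T : C(X, Fin m → ℝ) → Set (Fin q → Fin m → ℝ) :=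
    fun g => (fun x : Fin q → X => fun i => g (x i)) '' Set.univ.pi B with hT
  have hTcompact : ∀ g, IsCompact (T g) := by
    intro g
    refine IsCompact.image ?_ ?_
    · exact isCompact_univ_pi fun i => (hBclosed i).isCompact
    · exact continuous_pi fun i => g.continuous.comp (continuous_apply i)
  have hCG : ∀ g, CGamma B d g = F ∩ T g := by
    intro g
    ext y
    constructor
    · rintro ⟨h1, h2⟩
      choose x hx hgx using h2
      exact ⟨h1, x, fun i _ => hx i, funext hgx⟩
    · rintro ⟨h1, x, hx, rfl⟩
      exact ⟨h1, fun i => ⟨x i, hx i (Set.mem_univ i), rfl⟩⟩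
  constructor
  · intro g
    rw [hCG g]
    exact (hTcompact g).inter_left hFclosed
  · intro W hW
    rw [Metric.isOpen_iff]
    intro g hg
    simp only [Set.mem_setOf_eq, hCG g] at hg
    have hTV : T g ⊆ W ∪ Fᶜ := by
      intro y hy
      by_cases hyF : y ∈ F
      · exact Or.inl (hg ⟨hyF, hy⟩)
      · exact Or.inr hyF
    obtain ⟨δ, hδ, hthick⟩ := (hTcompact g).exists_thickening_subset_open
      (hW.union hFclosed.isOpen_compl) hTV
    refine ⟨δ, hδ, ?_⟩
    intro g' hg'
    simp only [Set.mem_setOf_eq, hCG g']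
    rintro y ⟨hyF, x, hx, rfl⟩
    have hmem : (fun i => g' (x i)) ∈ Metric.thickening δ (T g) := by
      rw [Metric.mem_thickening_iff]
      refine ⟨fun i => g (x i), ⟨x, hx, rfl⟩, ?_⟩
      rw [dist_pi_lt_iff hδ]
      intro i
      calc dist (g' (x i)) (g (x i)) ≤ dist g' g := ContinuousMap.dist_apply_le_dist _
        _ < δ := by rwa [Metric.mem_ball] at hg'
    rcases hthick hmem with h | h
    · exact h
    · exact absurd hyF h
end
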